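/- arXiv:1410.5415 — 4 statements merged into one kernel-verified Lean document; each statement's English description precedes it below -/
import Mathlib

section
/- Let G be a totally duplicated genome with n couples of paralogous markers and let C_i denote the maximum size of a set of pairwise independent non-duplicated cycles of the dedoubled adjacency graph A(G). Then: (1) C_i ≤ n; (2) if G is a dedoubled genome then C_i = n; (3) any single DCJ operation applied to G changes C_i by −1, 0 or +1. -/
namespace Rearr

/-- A marker occurrence: gene identifier and paralog copy flag. -/
abbrev Occ : Type := ℕ × Bool

/-- An extremity of a marker occurrence (`true` = head, `false` = tail). -/
abbrev Ext : Type := Occ × Bool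

/-- The paralogous extremity: other copy, same end. -/
def flipCopy (e : Ext) : Ext := ((e.1.1, !e.1.2), e.2)

/-- The paralogous opposite extremity: other copy, other end. -/
def coFlip (e : Ext) : Ext := ((e.1.1, !e.1.2), !e.2)

/-- A genome: a finite set of marker occurrences together with a set of
adjacencies, i.e. a partial matching on the extremities of the occurrences.
Unmatched extremities are telomeres; an adjacency is an unordered pair of
extremities, so that the adjacencies `(x y)` and `(−y −x)` are identified. -/
structure Genome where
  occs : Finset Occ
  adj : Finset (Sym2 Ext)

namespace Genome

/-- Well-formedness of a genome: adjacencies only involve extremities of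
present occurrences, and every extremity lies in at most one adjacency. -/
def WF (G : Genome) : Prop :=
  (∀ p ∈ G.adj, ∀ e ∈ p, (e : Ext).1 ∈ G.occs) ∧
  ∀ p ∈ G.adj, ∀ q ∈ G.adj, ∀ e : Ext, e ∈ p → e ∈ q → p = q

def matched (G : Genome) (e : Ext) : Prop := ∃ p ∈ G.adj, e ∈ p

/-- `e` is a telomere of `G`. -/
def telo (G : Genome) (e : Ext) : Prop := e.1 ∈ G.occs ∧ ¬ G.matched e

/-- a non-duplicated genome: no marker is duplicated. -/
def NonDup (G : Genome) : Prop :=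
  ∀ g : ℕ, ¬ (((g, true) : Occ) ∈ G.occs ∧ ((g, false) : Occ) ∈ G.occs)

/-- a totally duplicated genome: every marker appears exactly twice. -/
def TotDup (G : Genome) : Prop :=
  ∀ g : ℕ, ∀ c : Bool, ((g, c) : Occ) ∈ G.occs → ((g, !c) : Occ) ∈ G.occs

/-- the marker `g` is duplicated in `G`. -/
def DupGene (G : Genome) (g : ℕ) : Prop :=
  ((g, true) : Occ) ∈ G.occs ∧ ((g, false) : Occ) ∈ G.occs

/-- number of distinct markers (genes). -/
def numGenes (G : Genome) : ℕ := (G.occs.image Prod.fst).card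

/-- A dedoubled genome: each duplicated marker `x` forms a doublet
`(x x̄)` or `(x̄ x)`. -/
def Dedoubled (G : Genome) : Prop :=
  ∀ g : ℕ, G.DupGene g →
    ∃ c : Bool, s((((g, c), true) : Ext), (((g, !c), false) : Ext)) ∈ G.adj

/-- Two extremities lie in the same chromosome of `G`. -/
def chromRel (G : Genome) (e f : Ext) : Prop :=
  Relation.EqvGen (fun e f => s(e, f) ∈ G.adj ∨ (e.1 = f.1 ∧ e.1 ∈ G.occs)) e f

/-- `G` consists of a single linear chromosome. -/
def Unilinear (G : Genome) : Prop :=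
  G.occs.Nonempty ∧ (∀ e f : Ext, e.1 ∈ G.occs → f.1 ∈ G.occs → G.chromRel e f) ∧
  ∃ e : Ext, G.telo e

/-- `G` consists of a single circular chromosome. -/
def Unicircular (G : Genome) : Prop :=
  G.occs.Nonempty ∧ (∀ e f : Ext, e.1 ∈ G.occs → f.1 ∈ G.occs → G.chromRel e f) ∧
  ∀ e : Ext, ¬ G.telo e

end Genome

/-- A DCJ operation: cut two adjacencies of the genome and rejoin the four
exposed extremities in any possible way (including the degenerate variants
involving telomeres). -/
def IsDCJ (G G' : Genome) : Prop :=
  G.WF ∧ G'.WF ∧ G.occs = G'.occs ∧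
  ((∃ a b c d : Ext, s(a, b) ∈ G.adj ∧ s(c, d) ∈ G.adj ∧ s(a, b) ≠ s(c, d) ∧
      (G'.adj = insert s(a, c) (insert s(b, d) ((G.adj.erase s(a, b)).erase s(c, d))) ∨
       G'.adj = insert s(a, d) (insert s(b, c) ((G.adj.erase s(a, b)).erase s(c, d))))) ∨
   (∃ a b c : Ext, s(a, b) ∈ G.adj ∧ G.telo c ∧
      G'.adj = insert s(a, c) (G.adj.erase s(a, b))) ∨
   (∃ a b : Ext, s(a, b) ∈ G.adj ∧ G'.adj = G.adj.erase s(a, b)) ∨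
   (∃ a b : Ext, G.telo a ∧ G.telo b ∧ a ≠ b ∧ G'.adj = insert s(a, b) G.adj))

/-- A reversal: a DCJ that inverts a segment of a chromosome, i.e. a DCJ
preserving the telomeres and the distribution of markers into chromosomes. -/
def IsReversal (G G' : Genome) : Prop :=
  IsDCJ G G' ∧ (∀ e : Ext, G.matched e ↔ G'.matched e) ∧
  ∀ e f : Ext, G.chromRel e f ↔ G'.chromRel e f

/-- `Scen R ℓ G H`: a scenario of `ℓ` operations of type `R` transforms `G` into `H`. -/
def Scen {α : Type*} (R : α → α → Prop) : ℕ → α → α → Prop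
  | 0, G, H => G = H
  | n + 1, G, H => ∃ K, R G K ∧ Scen R n K H

namespace Genome

/-- The natural graph `NG(G)`, as a relation on extremities: two extremities
are related if they lie in the same adjacency (the same vertex of `NG(G)`) or
are the two endpoints of an edge of `NG(G)` (paralogous extremities with the
same end). -/
def ngRel (G : Genome) (e f : Ext) : Prop :=
  Relation.EqvGen (fun e f => s(e, f) ∈ G.adj ∨
    (f = flipCopy e ∧ e.1 ∈ G.occs ∧ f.1 ∈ G.occs)) e f

/-- a connected component of the natural graph. -/
def IsNGClass (G : Genome) (S : Set Ext) : Prop :=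
  ∃ e : Ext, e.1 ∈ G.occs ∧ S = {f | G.ngRel e f}

/-- a cycle of the natural graph: a component without telomere. -/
def IsNGCycle (G : Genome) (S : Set Ext) : Prop :=
  G.IsNGClass S ∧ ∀ e ∈ S, G.matched e

/-- a path of the natural graph: a component containing a telomere. -/
def IsNGPath (G : Genome) (S : Set Ext) : Prop :=
  G.IsNGClass S ∧ ∃ e ∈ S, ¬ G.matched e

/-- the number of edges of a component of the natural graph. -/
noncomputable def ngEdges (G : Genome) (S : Set Ext) : ℕ :=
  Set.ncard {q : Sym2 Ext | ∃ e : Ext, q = s(e, flipCopy e) ∧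
    e.1 ∈ G.occs ∧ (flipCopy e).1 ∈ G.occs ∧ e ∈ S}

/-- the number of cycles of the natural graph. -/
noncomputable def ngCycleCount (G : Genome) : ℕ :=
  Set.ncard {S : Set Ext | G.IsNGCycle S}

/-- the number of even cycles of the natural graph. -/
noncomputable def ngEvenCycleCount (G : Genome) : ℕ :=
  Set.ncard {S : Set Ext | G.IsNGCycle S ∧ Even (G.ngEdges S)}

/-- the number of odd cycles of the natural graph. -/
noncomputable def ngOddCycleCount (G : Genome) : ℕ :=
  Set.ncard {S : Set Ext | G.IsNGCycle S ∧ Odd (G.ngEdges S)}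

/-- the number of even paths of the natural graph. -/
noncomputable def ngEvenPathCount (G : Genome) : ℕ :=
  Set.ncard {S : Set Ext | G.IsNGPath S ∧ Even (G.ngEdges S)}

/-- The dedoubled adjacency graph `A(G)`, as a relation on extremities: two
extremities are related if they lie in the same adjacency (vertex of `A(G)`)
or are the two endpoints of an edge of `A(G)` (for each marker `x`, one edge
between the head of `x` and the tail of `x̄`). -/
def daRel (G : Genome) (e f : Ext) : Prop :=
  Relation.EqvGen (fun e f => s(e, f) ∈ G.adj ∨
    (f = coFlip e ∧ e.1 ∈ G.occs ∧ f.1 ∈ G.occs)) e f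

/-- an element (connected component) of the dedoubled adjacency graph. -/
def IsDAClass (G : Genome) (S : Set Ext) : Prop :=
  ∃ e : Ext, e.1 ∈ G.occs ∧ S = {f | G.daRel e f}

/-- a cycle of the dedoubled adjacency graph. -/
def IsDACycle (G : Genome) (S : Set Ext) : Prop :=
  G.IsDAClass S ∧ ∀ e ∈ S, G.matched e

/-- a path of the dedoubled adjacency graph. -/
def IsDAPath (G : Genome) (S : Set Ext) : Prop :=
  G.IsDAClass S ∧ ∃ e ∈ S, ¬ G.matched e

end Genome

/-- the element `S` of `A(G)` contains the couple `(x, x̄)` of gene `g`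
(it contains one of the two edges associated with `g`). -/
def ElemHasCouple (S : Set Ext) (g : ℕ) : Prop :=
  ∃ c h : Bool, (((g, c), h) : Ext) ∈ S

/-- the element `S` contains the couple of gene `g` twice (both of its edges). -/
def ElemHasCoupleTwice (S : Set Ext) (g : ℕ) : Prop :=
  ∀ c h : Bool, (((g, c), h) : Ext) ∈ S

/-- a non-duplicated element of `A(G)`. -/
def NonDupElem (S : Set Ext) : Prop := ∀ g : ℕ, ¬ ElemHasCoupleTwice S g

/-- independent elements: no couple is contained in both. -/
def IndepElems (S T : Set Ext) : Prop :=
  ∀ g : ℕ, ¬ (ElemHasCouple S g ∧ ElemHasCouple T g)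

/-- a family of pairwise independent non-duplicated cycles of `A(G)`. -/
def IndepCycleFam (G : Genome) (F : Finset (Set Ext)) : Prop :=
  (∀ S ∈ F, G.IsDACycle S ∧ NonDupElem S) ∧
  ∀ S ∈ F, ∀ T ∈ F, S ≠ T → IndepElems S T

/-- a chromosome of `G`, as the set of extremities it carries. -/
def Genome.IsChrom (G : Genome) (S : Set Ext) : Prop :=
  ∃ e : Ext, e.1 ∈ G.occs ∧ S = {f | G.chromRel e f}

/-- a doubled chromosome: a chromosome globally invariant under the paralogy
map (reducible to `(x x̄)`). -/
def Genome.IsDoubledChrom (G : Genome) (S : Set Ext) : Prop :=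
  G.IsChrom S ∧ flipCopy '' S = S

/-- the number of doubled chromosomes of `G`. -/
noncomputable def Genome.doubledCount (G : Genome) : ℕ :=
  Set.ncard {S : Set Ext | G.IsDoubledChrom S}

/-- A perfectly duplicated genome: totally duplicated, every adjacency is a
double-adjacency, and no adjacency is of the form `(x −x̄)`. -/
def Genome.PerfDup (G : Genome) : Prop :=
  G.TotDup ∧ (∀ p ∈ G.adj, Sym2.map flipCopy p ∈ G.adj) ∧
  ∀ e : Ext, s(e, flipCopy e) ∉ G.adj

/-- `Gc` is obtained from the unilinear genome `G` by circularization: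
its two telomeres are joined into an adjacency. -/
def Circularize (G Gc : Genome) : Prop :=
  Gc.occs = G.occs ∧ ∃ e f : Ext, G.telo e ∧ G.telo f ∧ e ≠ f ∧
    Gc.adj = insert s(e, f) G.adj

/-- a signed marker: gene id, paralog copy flag, sign (`true` = positive). -/
abbrev Mk : Type := ℕ × Bool × Bool

def mOcc (m : Mk) : Occ := (m.1, m.2.1)

/-- right(reading)-facing extremity of a signed marker. -/
def rExt (m : Mk) : Ext := (mOcc m, m.2.2)

/-- left(reading)-facing extremity of a signed marker. -/
def lExt (m : Mk) : Ext := (mOcc m, !m.2.2)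

/-- the adjacencies of a linear chromosome given by a list of signed markers. -/
def linAdj : List Mk → Finset (Sym2 Ext)
  | [] => ∅
  | [_] => ∅
  | x :: y :: t => insert s(rExt x, lExt y) (linAdj (y :: t))

def occsOf (l : List Mk) : Finset Occ := (l.map mOcc).toFinset

/-- the unilinear genome with chromosome `(∘ l ∘)`. -/
def linGenome (l : List Mk) : Genome := ⟨occsOf l, linAdj l⟩

/-- the adjacencies of a circular chromosome given by a list of signed markers. -/
def circAdj (l : List Mk) : Finset (Sym2 Ext) :=
  match l with
  | [] => ∅
  | x :: t => insert s(rExt ((x :: t).getLast (by simp)), lExt x) (linAdj (x :: t))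

/-- the unicircular genome obtained by circularizing `(∘ l ∘)`. -/
def circGenome (l : List Mk) : Genome := ⟨occsOf l, circAdj l⟩

/-- the paralogous copy of a signed marker (same gene, same sign, other copy). -/
def copyFlipM (m : Mk) : Mk := (m.1, !m.2.1, m.2.2)

/-- A 1-tandem duplicated genome: a unilinear genome of the form `(∘ w w̄ ∘)`,
i.e. reducible to `(∘ x x̄ ∘)` by contracting runs of double-adjacencies. -/
def IsTandem (G : Genome) : Prop :=
  ∃ w : List Mk, w ≠ [] ∧ (w.map (fun m => m.1)).Nodup ∧
    G = linGenome (w ++ w.map copyFlipM)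

end Rearr

namespace Rearr

section Infra

open Relation

/-- the base relation of the dedoubled adjacency graph. -/
def rRel (G : Genome) (e f : Ext) : Prop :=
  s(e, f) ∈ G.adj ∨ (f = coFlip e ∧ e.1 ∈ G.occs ∧ f.1 ∈ G.occs)

lemma daRel_eq (G : Genome) : G.daRel = Relation.EqvGen (rRel G) := rfl

lemma coFlip_coFlip (e : Ext) : coFlip (coFlip e) = e := by
  simp [coFlip]

lemma rRel_symm {G : Genome} {e f : Ext} (h : rRel G e f) : rRel G f e := by
  rcases h with h | ⟨rfl, h1, h2⟩
  · left; rwa [Sym2.eq_swap]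
  · right; exact ⟨(coFlip_coFlip e).symm, h2, h1⟩

lemma daRel_refl (G : Genome) (e : Ext) : G.daRel e e := Relation.EqvGen.refl e

lemma daRel_symm {G : Genome} {e f : Ext} (h : G.daRel e f) : G.daRel f e :=
  Relation.EqvGen.symm _ _ h

lemma daRel_trans {G : Genome} {e f g : Ext} (h1 : G.daRel e f) (h2 : G.daRel f g) :
    G.daRel e g := Relation.EqvGen.trans _ _ _ h1 h2

lemma daRel_of_rRel {G : Genome} {e f : Ext} (h : rRel G e f) : G.daRel e f :=
  Relation.EqvGen.rel _ _ h

lemma mem_iff_of_closed {G : Genome} {S : Set Ext}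
    (hcl : ∀ x ∈ S, ∀ y, rRel G x y → y ∈ S) :
    ∀ x y : Ext, G.daRel x y → (x ∈ S ↔ y ∈ S) := by
  intro x y h
  rw [daRel_eq] at h
  induction h with
  | rel a b hab => exact ⟨fun ha => hcl a ha b hab, fun hb => hcl b hb a (rRel_symm hab)⟩
  | refl a => exact Iff.rfl
  | symm a b _ ih => exact ih.symm
  | trans a b c _ _ ih1 ih2 => exact ih1.trans ih2

lemma class_closed (G : Genome) (e0 : Ext) :
    ∀ x ∈ {f | G.daRel e0 f}, ∀ y, rRel G x y → y ∈ {f | G.daRel e0 f} :=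
  fun _ hx y hxy => daRel_trans hx (daRel_of_rRel hxy)

lemma class_eq_of_mem {G : Genome} {e0 e : Ext} (h : G.daRel e0 e) :
    {f | G.daRel e0 f} = {f | G.daRel e f} := by
  ext f
  exact ⟨fun hf => daRel_trans (daRel_symm h) hf, fun hf => daRel_trans h hf⟩

lemma class_eq {G : Genome} {e0 : Ext} {S : Set Ext}
    (he0 : e0 ∈ S)
    (hcl : ∀ x ∈ S, ∀ y, rRel G x y → y ∈ S)
    (hconn : ∀ x ∈ S, G.daRel e0 x) :
    S = {f | G.daRel e0 f} := by
  ext f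
  exact ⟨fun hf => hconn f hf, fun hf => (mem_iff_of_closed hcl e0 f hf).mp he0⟩

/-- transfer of an untouched cycle from one genome to another. -/
lemma transfer_component {H H' : Genome} (hocc : H.occs = H'.occs)
    {X : Set Ext}
    (hdiff : ∀ p : Sym2 Ext, ((p ∈ H.adj ∧ p ∉ H'.adj) ∨ (p ∈ H'.adj ∧ p ∉ H.adj)) →
      ∀ e ∈ p, e ∈ X)
    {S : Set Ext} (hS : H.IsDACycle S) (hSX : ∀ e ∈ X, e ∉ S) :
    H'.IsDACycle S := by
  obtain ⟨⟨e0, he0, rfl⟩, hmat⟩ := hS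
  set S := {f | H.daRel e0 f} with hSdef
  have hclH : ∀ x ∈ S, ∀ y, rRel H x y → y ∈ S := class_closed H e0
  have hmat' : ∀ x ∈ S, H'.matched x := by
    intro x hx
    obtain ⟨p, hp, hxp⟩ := hmat x hx
    by_cases hp' : p ∈ H'.adj
    · exact ⟨p, hp', hxp⟩
    · exact absurd hx (hSX x (hdiff p (Or.inl ⟨hp, hp'⟩) x hxp))
  have hstep : ∀ x ∈ S, ∀ y, rRel H x y → rRel H' x y := by
    intro x hx y hxy
    rcases hxy with h | ⟨h1, h2, h3⟩
    · by_cases h' : s(x, y) ∈ H'.adj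
      · exact Or.inl h'
      · exact absurd hx (hSX x (hdiff _ (Or.inl ⟨h, h'⟩) x (Sym2.mem_mk_left x y)))
    · exact Or.inr ⟨h1, hocc ▸ h2, hocc ▸ h3⟩
  have hstep' : ∀ x ∈ S, ∀ y, rRel H' x y → rRel H x y ∧ y ∈ S := by
    intro x hx y hxy
    rcases hxy with h | ⟨h1, h2, h3⟩
    · by_cases h' : s(x, y) ∈ H.adj
      · exact ⟨Or.inl h', hclH x hx y (Or.inl h')⟩
      · exact absurd hx (hSX x (hdiff _ (Or.inr ⟨h, h'⟩) x (Sym2.mem_mk_left x y)))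
    · have : rRel H x y := Or.inr ⟨h1, hocc ▸ h2, hocc ▸ h3⟩
      exact ⟨this, hclH x hx y this⟩
  have hcl' : ∀ x ∈ S, ∀ y, rRel H' x y → y ∈ S := fun x hx y hxy => (hstep' x hx y hxy).2
  have hforward : ∀ x y : Ext, H.daRel x y → (x ∈ S ↔ y ∈ S) ∧ (x ∈ S → H'.daRel x y) := by
    intro x y h
    rw [daRel_eq] at h
    induction h with
    | rel a b hab =>
      refine ⟨⟨fun ha => hclH a ha b hab, fun hb => hclH b hb a (rRel_symm hab)⟩, ?_⟩
      exact fun ha => daRel_of_rRel (hstep a ha b hab)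
    | refl a => exact ⟨Iff.rfl, fun _ => daRel_refl H' a⟩
    | symm a b _ ih => exact ⟨ih.1.symm, fun hb => daRel_symm (ih.2 (ih.1.mpr hb))⟩
    | trans a b c _ _ ih1 ih2 =>
      exact ⟨ih1.1.trans ih2.1, fun ha => daRel_trans (ih1.2 ha) (ih2.2 (ih1.1.mp ha))⟩
  have hset : S = {f | H'.daRel e0 f} := by
    ext f
    constructor
    · intro hf
      exact (hforward e0 f hf).2 (daRel_refl H e0)
    · intro hf
      exact (mem_iff_of_closed hcl' e0 f hf).mp (daRel_refl H e0)
  exact ⟨⟨e0, hocc ▸ he0, hset⟩, hmat'⟩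

/-- merging two touched cycles into one new cycle. -/
lemma merge_cycle {H H' : Genome} (hocc : H.occs = H'.occs)
    {X : Set Ext}
    (hdiff : ∀ p : Sym2 Ext, ((p ∈ H.adj ∧ p ∉ H'.adj) ∨ (p ∈ H'.adj ∧ p ∉ H.adj)) →
      ∀ e ∈ p, e ∈ X)
    {u v : Ext} (hu : u.1 ∈ H.occs)
    (hcov : ∀ e ∈ X, H.daRel u e ∨ H.daRel v e)
    (hXm : ∀ e ∈ X, H'.matched e)
    (hC1 : H.IsDACycle {f | H.daRel u f}) (hC2 : H.IsDACycle {f | H.daRel v f}) :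
    ∃ T : Set Ext, H'.IsDACycle T ∧ u ∈ T ∧
      T ⊆ {f | H.daRel u f} ∪ {f | H.daRel v f} := by
  set U : Set Ext := {f | H.daRel u f} ∪ {f | H.daRel v f} with hUdef
  have hUcl : ∀ x ∈ U, ∀ y, rRel H x y → y ∈ U := by
    rintro x (hx | hx) y hxy
    · exact Or.inl (class_closed H u x hx y hxy)
    · exact Or.inr (class_closed H v x hx y hxy)
  have hUmat : ∀ x ∈ U, H'.matched x := by
    intro x hx
    have hmx : H.matched x := by
      rcases hx with hx | hx
      · exact hC1.2 x hx
      · exact hC2.2 x hx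
    obtain ⟨p, hp, hxp⟩ := hmx
    by_cases hp' : p ∈ H'.adj
    · exact ⟨p, hp', hxp⟩
    · exact hXm x (hdiff p (Or.inl ⟨hp, hp'⟩) x hxp)
  have hUcl' : ∀ x ∈ U, ∀ y, rRel H' x y → y ∈ U := by
    intro x hx y hxy
    rcases hxy with h | ⟨h1, h2, h3⟩
    · by_cases h' : s(x, y) ∈ H.adj
      · exact hUcl x hx y (Or.inl h')
      · rcases hcov y (hdiff _ (Or.inr ⟨h, h'⟩) y (Sym2.mem_mk_right x y)) with hy | hy
        · exact Or.inl hy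
        · exact Or.inr hy
    · exact hUcl x hx y (Or.inr ⟨h1, hocc ▸ h2, hocc ▸ h3⟩)
  have huU : u ∈ U := Or.inl (daRel_refl H u)
  refine ⟨{f | H'.daRel u f}, ⟨⟨u, hocc ▸ hu, rfl⟩, ?_⟩, daRel_refl H' u, ?_⟩
  · intro e he
    exact hUmat e ((mem_iff_of_closed hUcl' u e he).mp huU)
  · intro e he
    exact (mem_iff_of_closed hUcl' u e he).mp huU

lemma indep_symm {S T : Set Ext} (h : IndepElems S T) : IndepElems T S :=
  fun g hg => h g ⟨hg.2, hg.1⟩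

/-- The key family-transfer lemma: if adjacency changes are confined to `X`,
and either (drop mode) all matched extremities of `X` are in one component of
`A(H)`, or (merge mode) they are in two components and `X` is fully matched in
`H'`, then an independent cycle family loses at most one cycle. -/
lemma family_transfer (H H' : Genome) (hocc : H.occs = H'.occs)
    (X : Set Ext)
    (hdiff : ∀ p : Sym2 Ext, ((p ∈ H.adj ∧ p ∉ H'.adj) ∨ (p ∈ H'.adj ∧ p ∉ H.adj)) →
      ∀ e ∈ p, e ∈ X)
    (hcase : (∃ w : Ext, ∀ e ∈ X, H.matched e → H.daRel w e) ∨
      (∃ u v : Ext, u.1 ∈ H.occs ∧ u ∈ X ∧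
        (∀ e ∈ X, H.daRel u e ∨ H.daRel v e) ∧ (∀ e ∈ X, H'.matched e)))
    (F : Finset (Set Ext)) (hF : IndepCycleFam H F) :
    ∃ F' : Finset (Set Ext), IndepCycleFam H' F' ∧ F.card ≤ F'.card + 1 := by
  classical
  set F0 : Finset (Set Ext) := F.filter (fun S => ∀ e ∈ X, e ∉ S) with hF0def
  set Ft : Finset (Set Ext) := F.filter (fun S => ¬ ∀ e ∈ X, e ∉ S) with hFtdef
  have hcard : F0.card + Ft.card = F.card :=
    Finset.card_filter_add_card_filter_not (p := fun S => ∀ e ∈ X, e ∉ S)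
  have hF0mem : ∀ S ∈ F0, S ∈ F ∧ ∀ e ∈ X, e ∉ S := by
    intro S hS
    rw [hF0def, Finset.mem_filter] at hS
    exact hS
  have hF0fam : IndepCycleFam H' F0 := by
    constructor
    · intro S hS
      obtain ⟨hSF, hSX⟩ := hF0mem S hS
      exact ⟨transfer_component hocc hdiff (hF.1 S hSF).1 hSX, (hF.1 S hSF).2⟩
    · intro S hS T hT hST
      exact hF.2 S (hF0mem S hS).1 T (hF0mem T hT).1 hST
  -- touched components: each touched set is a daRel-class meeting X
  have htouched : ∀ S ∈ Ft, S ∈ F ∧ ∃ e ∈ X, e ∈ S ∧ S = {f | H.daRel e f} := by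
    intro S hS
    rw [hFtdef, Finset.mem_filter] at hS
    obtain ⟨hSF, hnp⟩ := hS
    push_neg at hnp
    obtain ⟨e, heX, heS⟩ := hnp
    obtain ⟨⟨e1, he1, hSe1⟩, _⟩ := (hF.1 S hSF).1
    refine ⟨hSF, e, heX, heS, ?_⟩
    rw [hSe1]
    exact class_eq_of_mem (by rw [hSe1] at heS; exact heS)
  rcases hcase with ⟨w, hw⟩ | ⟨u, v, hu, huX, hcov, hXm⟩
  · -- drop mode: Ft ⊆ {class of w}
    have hsub : Ft ⊆ {({f | H.daRel w f} : Set Ext)} := by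
      intro S hS
      obtain ⟨hSF, e, heX, heS, hSe⟩ := htouched S hS
      have hme : H.matched e := (hF.1 S hSF).1.2 e heS
      rw [Finset.mem_singleton, hSe]
      exact (class_eq_of_mem (hw e heX hme)).symm
    have : Ft.card ≤ 1 := le_trans (Finset.card_le_card hsub) (by simp)
    exact ⟨F0, hF0fam, by omega⟩
  · -- merge mode: Ft ⊆ {class u, class v}
    set Su : Set Ext := {f | H.daRel u f} with hSudef
    set Sv : Set Ext := {f | H.daRel v f} with hSvdef
    have hsub : Ft ⊆ {Su, Sv} := by
      intro S hS
      obtain ⟨hSF, e, heX, heS, hSe⟩ := htouched S hS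
      rcases hcov e heX with h | h
      · rw [Finset.mem_insert]
        exact Or.inl (by rw [hSe, hSudef]; exact (class_eq_of_mem h).symm)
      · rw [Finset.mem_insert, Finset.mem_singleton]
        exact Or.inr (by rw [hSe, hSvdef]; exact (class_eq_of_mem h).symm)
    have hFt2 : Ft.card ≤ 2 :=
      le_trans (Finset.card_le_card hsub) (le_trans (Finset.card_insert_le _ _) (by simp))
    by_cases h1 : Ft.card ≤ 1
    · exact ⟨F0, hF0fam, by omega⟩
    · -- Ft has exactly two elements, namely Su and Sv, distinct, both in F
      have hFt : Ft = {Su, Sv} := by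
        apply Finset.eq_of_subset_of_card_le hsub
        refine le_trans ?_ (by omega : 2 ≤ Ft.card)
        exact le_trans (Finset.card_insert_le _ _) (by simp)
      have hne : Su ≠ Sv := by
        intro h
        apply h1
        calc Ft.card ≤ ({Su, Sv} : Finset (Set Ext)).card := Finset.card_le_card hsub
          _ ≤ 1 := by rw [h]; simp
      have hSuF : Su ∈ F := (htouched Su (by rw [hFt]; simp)).1
      have hSvF : Sv ∈ F := (htouched Sv (by rw [hFt]; simp)).1
      have hSuX : ∃ e ∈ X, e ∈ Su := by
        obtain ⟨_, e, heX, heS, _⟩ := htouched Su (by rw [hFt]; simp)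
        exact ⟨e, heX, heS⟩
      have hSvX : ∃ e ∈ X, e ∈ Sv := by
        obtain ⟨_, e, heX, heS, _⟩ := htouched Sv (by rw [hFt]; simp)
        exact ⟨e, heX, heS⟩
      obtain ⟨T, hTcyc, huT, hTU⟩ :=
        merge_cycle hocc hdiff hu hcov hXm (hF.1 Su hSuF).1 (hF.1 Sv hSvF).1
      have hTX : ¬ (∀ e ∈ X, e ∉ T) := fun h => h u huX huT
      have hTnotF0 : T ∉ F0 := by
        intro h
        exact hTX (hF0mem T h).2
      -- couples of T are couples of Su or Sv
      have hTcouple : ∀ g : ℕ, ElemHasCouple T g → ElemHasCouple Su g ∨ ElemHasCouple Sv g := by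
        rintro g ⟨c, h, hg⟩
        rcases hTU hg with h' | h'
        · exact Or.inl ⟨c, h, h'⟩
        · exact Or.inr ⟨c, h, h'⟩
      have hTnondup : NonDupElem T := by
        intro g hg
        by_cases hsu : ElemHasCoupleTwice Su g
        · exact (hF.1 Su hSuF).2 g hsu
        · by_cases hsv : ElemHasCoupleTwice Sv g
          · exact (hF.1 Sv hSvF).2 g hsv
          · rw [ElemHasCoupleTwice] at hsu hsv
            push_neg at hsu hsv
            obtain ⟨c1, h1, hc1⟩ := hsu
            obtain ⟨c2, h2, hc2⟩ := hsv
            have m1 : (((g, c1), h1) : Ext) ∈ Sv := by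
              rcases hTU (hg c1 h1) with h | h
              · exact absurd h hc1
              · exact h
            have m2 : (((g, c2), h2) : Ext) ∈ Su := by
              rcases hTU (hg c2 h2) with h | h
              · exact h
              · exact absurd h hc2
            exact hF.2 Su hSuF Sv hSvF hne g ⟨⟨c2, h2, m2⟩, ⟨c1, h1, m1⟩⟩
      have hTindep : ∀ S ∈ F0, IndepElems T S := by
        intro S hS g ⟨hgT, hgS⟩
        obtain ⟨hSF, hSX⟩ := hF0mem S hS
        have hSne : S ≠ Su := by
          rintro rfl
          obtain ⟨e, heX, heS⟩ := hSuX
          exact hSX e heX heS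
        have hSne' : S ≠ Sv := by
          rintro rfl
          obtain ⟨e, heX, heS⟩ := hSvX
          exact hSX e heX heS
        rcases hTcouple g hgT with h | h
        · exact hF.2 Su hSuF S hSF hSne.symm g ⟨h, hgS⟩
        · exact hF.2 Sv hSvF S hSF hSne'.symm g ⟨h, hgS⟩
      refine ⟨insert T F0, ⟨?_, ?_⟩, ?_⟩
      · intro S hS
        rcases Finset.mem_insert.mp hS with rfl | hS
        · exact ⟨hTcyc, hTnondup⟩
        · exact hF0fam.1 S hS
      · intro S hS T' hT' hST
        rcases Finset.mem_insert.mp hS with rfl | hSF0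
        · rcases Finset.mem_insert.mp hT' with rfl | hT'F0
          · exact absurd rfl hST
          · exact hTindep T' hT'F0
        · rcases Finset.mem_insert.mp hT' with rfl | hT'F0
          · exact indep_symm (hTindep S hSF0)
          · exact hF0fam.2 S hSF0 T' hT'F0 hST
      · rw [Finset.card_insert_of_notMem hTnotF0]
        omega

/-- Part 1: an independent cycle family has at most `numGenes` members. -/
lemma card_le_numGenes (G : Genome) (F : Finset (Set Ext)) (hF : IndepCycleFam G F) :
    F.card ≤ G.numGenes := by
  classical
  have hγ : ∀ S : Set Ext, ∃ g : ℕ, S ∈ F →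
      g ∈ G.occs.image Prod.fst ∧ ElemHasCouple S g := by
    intro S
    by_cases hS : S ∈ F
    · obtain ⟨⟨e, he, hSe⟩, _⟩ := (hF.1 S hS).1
      refine ⟨e.1.1, fun _ => ⟨Finset.mem_image.mpr ⟨e.1, he, rfl⟩, e.1.2, e.2, ?_⟩⟩
      rw [hSe]
      exact daRel_refl G e
    · exact ⟨0, fun h => absurd h hS⟩
  choose γ hγ using hγ
  apply Finset.card_le_card_of_injOn γ (fun S hS => (hγ S hS).1)
  intro S hS T hT hST
  by_contra hne
  rw [Finset.mem_coe] at hS hT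
  exact hF.2 S hS T hT hne (γ S) ⟨(hγ S hS).2, hST ▸ (hγ T hT).2⟩

/-- a doublet adjacency gives a 1-cycle of `A(G)`. -/
lemma doublet_class (G : Genome) (hwf : G.WF) {g : ℕ} {c : Bool}
    (hadj : s((((g, c), true) : Ext), (((g, !c), false) : Ext)) ∈ G.adj) :
    ({(((g, c), true) : Ext), (((g, !c), false) : Ext)} : Set Ext) =
      {f | G.daRel (((g, c), true) : Ext) f} := by
  set a : Ext := ((g, c), true) with hadef
  set b : Ext := ((g, !c), false) with hbdef
  have hab : a ≠ b := by simp [hadef, hbdef]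
  apply class_eq (by left; rfl)
  · intro x hx y hxy
    simp only [Set.mem_insert_iff, Set.mem_singleton_iff] at hx
    rcases hx with rfl | rfl
    · rcases hxy with h | ⟨rfl, _, _⟩
      · have := hwf.2 _ h _ hadj a (Sym2.mem_mk_left _ _) (Sym2.mem_mk_left _ _)
        rw [Sym2.eq_iff] at this
        rcases this with ⟨_, rfl⟩ | ⟨h1, rfl⟩
        · right; rfl
        · exact absurd h1 hab
      · right
        show coFlip a = b
        simp [coFlip, hadef, hbdef]
    · rcases hxy with h | ⟨rfl, _, _⟩
      · have := hwf.2 _ h _ hadj b (Sym2.mem_mk_left _ _) (Sym2.mem_mk_right _ _)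
        rw [Sym2.eq_iff] at this
        rcases this with ⟨h1, rfl⟩ | ⟨_, rfl⟩
        · exact absurd h1.symm hab
        · left; rfl
      · left
        show coFlip b = a
        simp [coFlip, hadef, hbdef]
  · intro x hx
    simp only [Set.mem_insert_iff, Set.mem_singleton_iff] at hx
    rcases hx with rfl | rfl
    · exact daRel_refl G a
    · exact daRel_of_rRel (Or.inl hadj)

/-- Part 2: a dedoubled totally duplicated genome achieves `numGenes`. -/
lemma dedoubled_family (G : Genome) (hwf : G.WF) (htd : G.TotDup) (hdd : G.Dedoubled) :
    ∃ F : Finset (Set Ext), IndepCycleFam G F ∧ F.card = G.numGenes := by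
  classical
  set genes : Finset ℕ := G.occs.image Prod.fst with hgenes
  have hdup : ∀ g ∈ genes, G.DupGene g := by
    intro g hg
    obtain ⟨o, ho, rfl⟩ := Finset.mem_image.mp hg
    have h1 : (o.1, o.2) ∈ G.occs := by simpa using ho
    have h2 := htd o.1 o.2 h1
    cases hc : o.2
    · rw [hc] at h1 h2; simp only [Bool.not_false] at h2; exact ⟨h2, h1⟩
    · rw [hc] at h1 h2; simp only [Bool.not_true] at h2; exact ⟨h1, h2⟩
  have hcg : ∀ g : ℕ, ∃ c : Bool, g ∈ genes →
      s((((g, c), true) : Ext), (((g, !c), false) : Ext)) ∈ G.adj := by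
    intro g
    by_cases hg : g ∈ genes
    · obtain ⟨c, hc⟩ := hdd g (hdup g hg)
      exact ⟨c, fun _ => hc⟩
    · exact ⟨true, fun h => absurd h hg⟩
  choose cg hcg using hcg
  set mk : ℕ → Set Ext :=
    fun g => ({(((g, cg g), true) : Ext), (((g, !(cg g)), false) : Ext)} : Set Ext) with hmk
  refine ⟨genes.image mk, ⟨?_, ?_⟩, ?_⟩
  · intro S hS
    obtain ⟨g, hg, rfl⟩ := Finset.mem_image.mp hS
    have hadj := hcg g hg
    constructor
    · refine ⟨⟨((g, cg g), true), ?_, doublet_class G hwf hadj⟩, ?_⟩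
      · exact hwf.1 _ hadj _ (Sym2.mem_mk_left _ _)
      · intro e he
        simp only [hmk, Set.mem_insert_iff, Set.mem_singleton_iff] at he
        rcases he with rfl | rfl
        · exact ⟨_, hadj, Sym2.mem_mk_left _ _⟩
        · exact ⟨_, hadj, Sym2.mem_mk_right _ _⟩
    · intro g' hg'
      have h1 := hg' (cg g) false
      simp only [hmk, Set.mem_insert_iff, Set.mem_singleton_iff, Prod.mk.injEq] at h1
      rcases h1 with ⟨⟨_, _⟩, h⟩ | ⟨⟨_, h⟩, _⟩
      · exact absurd h (by simp)
      · exact absurd h (by simp)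
  · intro S hS T hT hST g' hg'
    obtain ⟨g1, hg1, rfl⟩ := Finset.mem_image.mp hS
    obtain ⟨g2, hg2, rfl⟩ := Finset.mem_image.mp hT
    obtain ⟨⟨c1, h1, hc1⟩, ⟨c2, h2, hc2⟩⟩ := hg'
    simp only [hmk, Set.mem_insert_iff, Set.mem_singleton_iff, Prod.mk.injEq] at hc1 hc2
    have e1 : g' = g1 := by rcases hc1 with ⟨⟨h, _⟩, _⟩ | ⟨⟨h, _⟩, _⟩ <;> exact h
    have e2 : g' = g2 := by rcases hc2 with ⟨⟨h, _⟩, _⟩ | ⟨⟨h, _⟩, _⟩ <;> exact h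
    exact hST (by rw [← e1, e2])
  · rw [Finset.card_image_of_injOn, Genome.numGenes]
    intro g1 hg1 g2 hg2 h
    have : (((g1, cg g1), true) : Ext) ∈ mk g2 := by
      rw [← h, hmk]; left; rfl
    simp only [hmk, Set.mem_insert_iff, Set.mem_singleton_iff, Prod.mk.injEq] at this
    rcases this with ⟨⟨h, _⟩, _⟩ | ⟨⟨h, _⟩, hh⟩
    · exact h
    · exact absurd hh (by simp)

/-- both transfer directions for the main DCJ case. -/
lemma case1_step (G G' : Genome) (hwfG : G.WF) (hocc : G.occs = G'.occs)
    (a b c d : Ext) (hab : s(a, b) ∈ G.adj) (hcd : s(c, d) ∈ G.adj)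
    (hadj' : G'.adj = insert s(a, c) (insert s(b, d) ((G.adj.erase s(a, b)).erase s(c, d)))) :
    (∀ F, IndepCycleFam G F → ∃ F', IndepCycleFam G' F' ∧ F.card ≤ F'.card + 1) ∧
    (∀ F', IndepCycleFam G' F' → ∃ F, IndepCycleFam G F ∧ F'.card ≤ F.card + 1) := by
  set X : Set Ext := {a, b, c, d} with hX
  have hmemX : ∀ e : Ext, (e = a ∨ e = b ∨ e = c ∨ e = d) → e ∈ X := by
    intro e he
    simp only [hX, Set.mem_insert_iff, Set.mem_singleton_iff]
    exact he
  have hdiff : ∀ p : Sym2 Ext, ((p ∈ G.adj ∧ p ∉ G'.adj) ∨ (p ∈ G'.adj ∧ p ∉ G.adj)) →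
      ∀ e ∈ p, e ∈ X := by
    rintro p (⟨h1, h2⟩ | ⟨h1, h2⟩) e he
    · have h3 : p ∉ (G.adj.erase s(a, b)).erase s(c, d) := fun hmem =>
        h2 (by rw [hadj']; exact Finset.mem_insert_of_mem (Finset.mem_insert_of_mem hmem))
      by_cases e1 : p = s(c, d)
      · subst e1
        rcases Sym2.mem_iff.mp he with rfl | rfl
        · exact hmemX e (by tauto)
        · exact hmemX e (by tauto)
      · by_cases e2 : p = s(a, b)
        · subst e2
          rcases Sym2.mem_iff.mp he with rfl | rfl
          · exact hmemX e (by tauto)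
          · exact hmemX e (by tauto)
        · exact absurd (Finset.mem_erase.mpr ⟨e1, Finset.mem_erase.mpr ⟨e2, h1⟩⟩) h3
    · rw [hadj'] at h1
      rcases Finset.mem_insert.mp h1 with rfl | h1
      · rcases Sym2.mem_iff.mp he with rfl | rfl
        · exact hmemX e (by tauto)
        · exact hmemX e (by tauto)
      · rcases Finset.mem_insert.mp h1 with rfl | h1
        · rcases Sym2.mem_iff.mp he with rfl | rfl
          · exact hmemX e (by tauto)
          · exact hmemX e (by tauto)
        · exact absurd (Finset.mem_of_mem_erase (Finset.mem_of_mem_erase h1)) h2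
  have ha1 : a.1 ∈ G.occs := hwfG.1 _ hab a (Sym2.mem_mk_left _ _)
  have hac : s(a, c) ∈ G'.adj := by rw [hadj']; exact Finset.mem_insert_self _ _
  have hbd : s(b, d) ∈ G'.adj := by
    rw [hadj']; exact Finset.mem_insert_of_mem (Finset.mem_insert_self _ _)
  have hcaseX : ∀ e ∈ X, e = a ∨ e = b ∨ e = c ∨ e = d := by
    intro e he
    simpa only [hX, Set.mem_insert_iff, Set.mem_singleton_iff] using he
  constructor
  · intro F hF
    apply family_transfer G G' hocc X hdiff _ F hF
    refine Or.inr ⟨a, c, ha1, hmemX a (by tauto), ?_, ?_⟩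
    · intro e he
      rcases hcaseX e he with rfl | rfl | rfl | rfl
      · exact Or.inl (daRel_refl G e)
      · exact Or.inl (daRel_of_rRel (Or.inl hab))
      · exact Or.inr (daRel_refl G e)
      · exact Or.inr (daRel_of_rRel (Or.inl hcd))
    · intro e he
      rcases hcaseX e he with rfl | rfl | rfl | rfl
      · exact ⟨_, hac, Sym2.mem_mk_left _ _⟩
      · exact ⟨_, hbd, Sym2.mem_mk_left _ _⟩
      · exact ⟨_, hac, Sym2.mem_mk_right _ _⟩
      · exact ⟨_, hbd, Sym2.mem_mk_right _ _⟩
  · intro F' hF'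
    apply family_transfer G' G hocc.symm X (fun p hp => hdiff p hp.symm) _ F' hF'
    refine Or.inr ⟨a, b, hocc ▸ ha1, hmemX a (by tauto), ?_, ?_⟩
    · intro e he
      rcases hcaseX e he with rfl | rfl | rfl | rfl
      · exact Or.inl (daRel_refl G' e)
      · exact Or.inr (daRel_refl G' e)
      · exact Or.inl (daRel_of_rRel (Or.inl hac))
      · exact Or.inr (daRel_of_rRel (Or.inl hbd))
    · intro e he
      rcases hcaseX e he with rfl | rfl | rfl | rfl
      · exact ⟨_, hab, Sym2.mem_mk_left _ _⟩
      · exact ⟨_, hab, Sym2.mem_mk_right _ _⟩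
      · exact ⟨_, hcd, Sym2.mem_mk_left _ _⟩
      · exact ⟨_, hcd, Sym2.mem_mk_right _ _⟩

/-- both transfer directions for any DCJ operation. -/
lemma dcj_step (G G' : Genome) (h : IsDCJ G G') :
    (∀ F, IndepCycleFam G F → ∃ F', IndepCycleFam G' F' ∧ F.card ≤ F'.card + 1) ∧
    (∀ F', IndepCycleFam G' F' → ∃ F, IndepCycleFam G F ∧ F'.card ≤ F.card + 1) := by
  obtain ⟨hwfG, hwfG', hocc, hcases⟩ := h
  rcases hcases with ⟨a, b, c, d, hab, hcd, hne, hadj' | hadj'⟩ | ⟨a, b, c, hab, hc, hadj'⟩ |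
    ⟨a, b, hab, hadj'⟩ | ⟨a, b, ha, hb, hne, hadj'⟩
  · exact case1_step G G' hwfG hocc a b c d hab hcd hadj'
  · refine case1_step G G' hwfG hocc a b d c hab
      (by rw [show s(d, c) = s(c, d) from Sym2.eq_swap]; exact hcd) ?_
    rw [show s(d, c) = s(c, d) from Sym2.eq_swap]
    exact hadj'
  · -- case 2: telomere variant
    set X : Set Ext := {a, b, c} with hX
    have hmemX : ∀ e : Ext, (e = a ∨ e = b ∨ e = c) → e ∈ X := by
      intro e he
      simp only [hX, Set.mem_insert_iff, Set.mem_singleton_iff]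
      exact he
    have hbm : G.matched b := ⟨_, hab, Sym2.mem_mk_right _ _⟩
    have hdiff : ∀ p : Sym2 Ext, ((p ∈ G.adj ∧ p ∉ G'.adj) ∨ (p ∈ G'.adj ∧ p ∉ G.adj)) →
        ∀ e ∈ p, e ∈ X := by
      rintro p (⟨h1, h2⟩ | ⟨h1, h2⟩) e he
      · have h3 : p ∉ G.adj.erase s(a, b) := fun hmem =>
          h2 (by rw [hadj']; exact Finset.mem_insert_of_mem hmem)
        have e2 : p = s(a, b) := by
          by_contra e2
          exact h3 (Finset.mem_erase.mpr ⟨e2, h1⟩)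
        subst e2
        rcases Sym2.mem_iff.mp he with rfl | rfl
        · exact hmemX e (by tauto)
        · exact hmemX e (by tauto)
      · rw [hadj'] at h1
        rcases Finset.mem_insert.mp h1 with rfl | h1
        · rcases Sym2.mem_iff.mp he with rfl | rfl
          · exact hmemX e (by tauto)
          · exact hmemX e (by tauto)
        · exact absurd (Finset.mem_of_mem_erase h1) h2
    have hac : s(a, c) ∈ G'.adj := by rw [hadj']; exact Finset.mem_insert_self _ _
    have hcaseX : ∀ e ∈ X, e = a ∨ e = b ∨ e = c := by
      intro e he
      simpa only [hX, Set.mem_insert_iff, Set.mem_singleton_iff] using he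
    constructor
    · intro F hF
      apply family_transfer G G' hocc X hdiff _ F hF
      refine Or.inl ⟨a, ?_⟩
      intro e he hem
      rcases hcaseX e he with rfl | rfl | rfl
      · exact daRel_refl G e
      · exact daRel_of_rRel (Or.inl hab)
      · exact absurd hem hc.2
    · intro F' hF'
      apply family_transfer G' G hocc.symm X (fun p hp => hdiff p hp.symm) _ F' hF'
      refine Or.inl ⟨a, ?_⟩
      intro e he hem
      rcases hcaseX e he with rfl | rfl | rfl
      · exact daRel_refl G' e
      · -- b matched in G' is impossible unless b = a
        obtain ⟨p, hp, hbp⟩ := hem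
        rw [hadj'] at hp
        rcases Finset.mem_insert.mp hp with rfl | hp
        · rcases Sym2.mem_iff.mp hbp with rfl | rfl
          · exact daRel_refl G' e
          · exact absurd hbm hc.2
        · exact absurd (hwfG.2 _ (Finset.mem_of_mem_erase hp) _ hab e hbp
            (Sym2.mem_mk_right _ _)) (Finset.mem_erase.mp hp).1
      · exact daRel_of_rRel (Or.inl hac)
  · -- case 3: cut an adjacency
    set X : Set Ext := {a, b} with hX
    have hdiff : ∀ p : Sym2 Ext, ((p ∈ G.adj ∧ p ∉ G'.adj) ∨ (p ∈ G'.adj ∧ p ∉ G.adj)) →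
        ∀ e ∈ p, e ∈ X := by
      rintro p (⟨h1, h2⟩ | ⟨h1, h2⟩) e he
      · have e2 : p = s(a, b) := by
          by_contra e2
          exact h2 (by rw [hadj']; exact Finset.mem_erase.mpr ⟨e2, h1⟩)
        subst e2
        rcases Sym2.mem_iff.mp he with rfl | rfl
        · exact Set.mem_insert _ _
        · exact Set.mem_insert_of_mem _ rfl
      · rw [hadj'] at h1
        exact absurd (Finset.mem_of_mem_erase h1) h2
    have hcaseX : ∀ e ∈ X, e = a ∨ e = b := by
      intro e he
      simpa only [hX, Set.mem_insert_iff, Set.mem_singleton_iff] using he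
    constructor
    · intro F hF
      apply family_transfer G G' hocc X hdiff _ F hF
      refine Or.inl ⟨a, ?_⟩
      intro e he hem
      rcases hcaseX e he with rfl | rfl
      · exact daRel_refl G e
      · exact daRel_of_rRel (Or.inl hab)
    · intro F' hF'
      apply family_transfer G' G hocc.symm X (fun p hp => hdiff p hp.symm) _ F' hF'
      refine Or.inl ⟨a, ?_⟩
      intro e he hem
      obtain ⟨p, hp, hep⟩ := hem
      rw [hadj'] at hp
      have hesab : e ∈ s(a, b) := by
        rcases hcaseX e he with rfl | rfl
        · exact Sym2.mem_mk_left _ _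
        · exact Sym2.mem_mk_right _ _
      exact absurd (hwfG.2 _ (Finset.mem_of_mem_erase hp) _ hab e hep hesab)
        (Finset.mem_erase.mp hp).1
  · -- case 4: join two telomeres
    set X : Set Ext := {a, b} with hX
    have hdiff : ∀ p : Sym2 Ext, ((p ∈ G.adj ∧ p ∉ G'.adj) ∨ (p ∈ G'.adj ∧ p ∉ G.adj)) →
        ∀ e ∈ p, e ∈ X := by
      rintro p (⟨h1, h2⟩ | ⟨h1, h2⟩) e he
      · exact absurd (by rw [hadj']; exact Finset.mem_insert_of_mem h1) h2
      · rw [hadj'] at h1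
        rcases Finset.mem_insert.mp h1 with rfl | h1
        · rcases Sym2.mem_iff.mp he with rfl | rfl
          · exact Set.mem_insert _ _
          · exact Set.mem_insert_of_mem _ rfl
        · exact absurd h1 h2
    have hcaseX : ∀ e ∈ X, e = a ∨ e = b := by
      intro e he
      simpa only [hX, Set.mem_insert_iff, Set.mem_singleton_iff] using he
    have hab' : s(a, b) ∈ G'.adj := by rw [hadj']; exact Finset.mem_insert_self _ _
    constructor
    · intro F hF
      apply family_transfer G G' hocc X hdiff _ F hF
      refine Or.inl ⟨a, ?_⟩
      intro e he hem
      rcases hcaseX e he with rfl | rfl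
      · exact absurd hem ha.2
      · exact absurd hem hb.2
    · intro F' hF'
      apply family_transfer G' G hocc.symm X (fun p hp => hdiff p hp.symm) _ F' hF'
      refine Or.inl ⟨a, ?_⟩
      intro e he hem
      rcases hcaseX e he with rfl | rfl
      · exact daRel_refl G' e
      · exact daRel_of_rRel (Or.inl hab')

end Infra

end Rearr

namespace Rearr

/-- Properties of `C_i`, the maximum size of a set of pairwise independent
non-duplicated cycles of the dedoubled adjacency graph `A(G)` of a totally
duplicated genome `G` with `n` couples of paralogous markers:
(1) `C_i ≤ n`; (2) if `G` is dedoubled then `C_i = n`; (3) a single DCJ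
operation changes `C_i` by `−1`, `0` or `+1`. -/
theorem independent_cycles_properties (G : Genome) (hwf : G.WF) (htd : G.TotDup)
    (n : ℕ) (hn : n = G.numGenes) :
    (∀ F : Finset (Set Ext), IndepCycleFam G F → F.card ≤ n) ∧
    (G.Dedoubled →
      IsGreatest {k : ℕ | ∃ F : Finset (Set Ext), IndepCycleFam G F ∧ F.card = k} n) ∧
    (∀ G' : Genome, IsDCJ G G' → ∀ k k' : ℕ,
      IsGreatest {k : ℕ | ∃ F : Finset (Set Ext), IndepCycleFam G F ∧ F.card = k} k →
      IsGreatest {k : ℕ | ∃ F : Finset (Set Ext), IndepCycleFam G' F ∧ F.card = k} k' →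
      k' ≤ k + 1 ∧ k ≤ k' + 1) := by
  subst hn
  refine ⟨fun F hF => card_le_numGenes G F hF, ?_, ?_⟩
  · intro hdd
    obtain ⟨F, hF, hcard⟩ := dedoubled_family G hwf htd hdd
    exact ⟨⟨F, hF, hcard⟩, fun k ⟨F', hF', hc⟩ => hc ▸ card_le_numGenes G F' hF'⟩
  · intro G' hdcj k k' hk hk'
    obtain ⟨hfwd, hbwd⟩ := dcj_step G G' hdcj
    constructor
    · obtain ⟨F', hF', hc'⟩ := hk'.1
      obtain ⟨F, hF, hle⟩ := hbwd F' hF'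
      have : F.card ≤ k := hk.2 ⟨F, hF, rfl⟩
      omega
    · obtain ⟨F, hF, hc⟩ := hk.1
      obtain ⟨F', hF', hle⟩ := hfwd F hF
      have : F'.card ≤ k' := hk'.2 ⟨F', hF', rfl⟩
      omega

end Rearr
end

section
/- Let G be a totally duplicated genome consisting of a single linear chromosome, so that the dedoubled adjacency graph A(G) contains exactly one path and some number C of cycles. Let m be the minimum number of cycles of A(G) that must be merged into the path to make it valid, and let C_i be the maximum size of a subset of non-duplicated pairwise independent cycles of A(G). Then C_i = C − m. -/
/-!
Every element of `A(G)` containing the couple of a marker `g` is the element of one of the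
two edges of `g`, so each couple lies in at most two elements; the path is the only element
that is not a cycle. Hence the cycles outside a family `F` of cycles that validates the path
are non-duplicated and pairwise independent (the element carrying any of their couples lies
in `F` or is the path), and conversely the cycles outside a family of non-duplicated pairwise
independent cycles validate the path. Taking complements in the set of all `C` cycles gives
`C - m ≤ C_i` and `m ≤ C - C_i`.
-/

namespace Rearr

namespace Genome

/-- Merging the cycles of `F` into the path `P` makes it valid. -/
def CoversCouples (G : Genome) (P : Set Ext) (F : Finset (Set Ext)) : Prop :=
  ∀ g : ℕ, G.DupGene g → ElemHasCouple P g ∨ ∃ S ∈ F, ElemHasCouple S g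

open Relation

variable {G : Genome}

lemma daRel_mem_occs_iff (hwf : G.WF) {e f : Ext} (h : G.daRel e f) :
    e.1 ∈ G.occs ↔ f.1 ∈ G.occs := by
  induction h with
  | rel a b hab =>
    rcases hab with hadj | ⟨-, ha, hb⟩
    · exact ⟨fun _ => hwf.1 _ hadj b (Sym2.mem_mk_right a b),
        fun _ => hwf.1 _ hadj a (Sym2.mem_mk_left a b)⟩
    · exact iff_of_true ha hb
  | refl => exact Iff.rfl
  | symm _ _ _ ih => exact ih.symm
  | trans _ _ _ _ _ ih₁ ih₂ => exact ih₁.trans ih₂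

lemma setOf_daRel_eq_of_daRel {a b : Ext} (h : G.daRel a b) :
    {f | G.daRel a f} = {f | G.daRel b f} := by
  ext f
  exact ⟨EqvGen.trans _ _ _ (EqvGen.symm _ _ h), EqvGen.trans _ _ _ h⟩

lemma daRel_coFlip {g : ℕ} (hg : G.DupGene g) (c h : Bool) :
    G.daRel ((g, c), h) ((g, !c), !h) :=
  EqvGen.rel _ _ (Or.inr ⟨rfl, by cases c <;> simp [hg.1, hg.2],
    by cases c <;> simp [hg.1, hg.2]⟩)

lemma TotDup.dupGene (htd : G.TotDup) {g : ℕ} {c : Bool} (hc : ((g, c) : Occ) ∈ G.occs) :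
    G.DupGene g := by
  cases c
  · exact ⟨htd g false hc, hc⟩
  · exact ⟨hc, htd g true hc⟩

namespace IsDAClass

variable {S T U : Set Ext} {g : ℕ}

lemma eq_setOf_daRel (hS : G.IsDAClass S) {x : Ext} (hx : x ∈ S) :
    S = {f | G.daRel x f} := by
  obtain ⟨e, -, rfl⟩ := hS
  exact setOf_daRel_eq_of_daRel hx

lemma mem_occs (hwf : G.WF) (hS : G.IsDAClass S) {x : Ext} (hx : x ∈ S) : x.1 ∈ G.occs := by
  obtain ⟨e, he, rfl⟩ := hS
  exact (daRel_mem_occs_iff hwf hx).1 he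

lemma eq_of_hasCoupleTwice (hS : G.IsDAClass S) (hT : G.IsDAClass T)
    (hSg : ElemHasCoupleTwice S g) (hTg : ElemHasCouple T g) : T = S := by
  obtain ⟨c, h, hx⟩ := hTg
  rw [hT.eq_setOf_daRel hx, hS.eq_setOf_daRel (hSg c h)]

lemma eq_or_eq_of_hasCouple (hg : G.DupGene g) (hT : G.IsDAClass T)
    (hTg : ElemHasCouple T g) :
    T = {f | G.daRel ((g, true), true) f} ∨ T = {f | G.daRel ((g, true), false) f} := by
  obtain ⟨c, h, hx⟩ := hTg
  rw [hT.eq_setOf_daRel hx]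
  cases c <;> cases h
  · exact Or.inl (setOf_daRel_eq_of_daRel (daRel_coFlip hg true true)).symm
  · exact Or.inr (setOf_daRel_eq_of_daRel (daRel_coFlip hg true false)).symm
  · exact Or.inr rfl
  · exact Or.inl rfl

lemma eq_or_eq_of_hasCouple_of_ne (hg : G.DupGene g) (hS : G.IsDAClass S)
    (hT : G.IsDAClass T) (hU : G.IsDAClass U) (hSg : ElemHasCouple S g)
    (hTg : ElemHasCouple T g) (hUg : ElemHasCouple U g) (hST : S ≠ T) : U = S ∨ U = T := by
  rcases eq_or_eq_of_hasCouple hg hS hSg with rfl | rfl <;>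
  rcases eq_or_eq_of_hasCouple hg hT hTg with rfl | rfl <;>
  rcases eq_or_eq_of_hasCouple hg hU hUg with rfl | rfl <;>
  simp_all

lemma eq_or_isDACycle {P : Set Ext} (hPuniq : ∀ Q : Set Ext, G.IsDAPath Q → Q = P)
    (hS : G.IsDAClass S) : S = P ∨ G.IsDACycle S :=
  (em (∃ e ∈ S, ¬ G.matched e)).imp (fun h => hPuniq S ⟨hS, h⟩)
    fun h => ⟨hS, by simpa using h⟩

end IsDAClass

lemma IsDAPath.not_isDACycle {P : Set Ext} (hP : G.IsDAPath P) : ¬ G.IsDACycle P := by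
  obtain ⟨e, he, hunmatched⟩ := hP.2
  exact fun hcyc => hunmatched (hcyc.2 e he)

lemma finite_setOf_isDACycle (G : Genome) : {S : Set Ext | G.IsDACycle S}.Finite := by
  have hext : {e : Ext | e.1 ∈ G.occs}.Finite :=
    (G.occs.finite_toSet.prod Set.finite_univ).subset fun e he => ⟨he, trivial⟩
  refine (hext.image fun e => {f | G.daRel e f}).subset ?_
  rintro S ⟨⟨e, he, rfl⟩, -⟩
  exact ⟨e, he, rfl⟩

end Genome

open Genome Relation

variable {G : Genome} {P : Set Ext}

lemma Genome.CoversCouples.indepCycleFam (hwf : G.WF) (htd : G.TotDup) (hP : G.IsDAPath P)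
    {F E : Finset (Set Ext)} (hFcls : ∀ S ∈ F, G.IsDAClass S) (hF : G.CoversCouples P F)
    (hE : ∀ S ∈ E, G.IsDACycle S ∧ S ∉ F) : IndepCycleFam G E := by
  have coverer : ∀ {g : ℕ}, G.DupGene g →
      ∃ U, G.IsDAClass U ∧ ElemHasCouple U g ∧ U ∉ E := by
    intro g hg
    rcases hF g hg with hPg | ⟨U, hUF, hUg⟩
    · exact ⟨P, hP.1, hPg, fun hPE => hP.not_isDACycle (hE P hPE).1⟩
    · exact ⟨U, hFcls U hUF, hUg, fun hUE => (hE U hUE).2 hUF⟩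
  refine ⟨fun S hS => ⟨(hE S hS).1, fun g hSg => ?_⟩,
    fun S hS T hT hST g ⟨hSg, hTg⟩ => ?_⟩
  · have hSc := (hE S hS).1.1
    obtain ⟨U, hU, hUg, hUE⟩ :=
      coverer ⟨hSc.mem_occs hwf (hSg true true), hSc.mem_occs hwf (hSg false true)⟩
    exact hUE (hSc.eq_of_hasCoupleTwice hU hSg hUg ▸ hS)
  · have hSc := (hE S hS).1.1
    obtain ⟨c, h, hx⟩ := hSg
    have hg := htd.dupGene (hSc.mem_occs hwf hx)
    obtain ⟨U, hU, hUg, hUE⟩ := coverer hg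
    rcases hSc.eq_or_eq_of_hasCouple_of_ne hg (hE T hT).1.1 hU ⟨c, h, hx⟩ hTg hUg hST
      with rfl | rfl
    exacts [hUE hS, hUE hT]

lemma IndepCycleFam.coversCouples (hPuniq : ∀ Q : Set Ext, G.IsDAPath Q → Q = P)
    {Fi E : Finset (Set Ext)} (hFi : IndepCycleFam G Fi)
    (hE : ∀ S, G.IsDACycle S → S ∉ Fi → S ∈ E) : G.CoversCouples P E := by
  intro g hg
  set head := {f | G.daRel ((g, true), true) f}
  set tail := {f | G.daRel ((g, true), false) f}
  have hhead : ElemHasCouple head g := ⟨true, true, EqvGen.refl _⟩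
  have htail : ElemHasCouple tail g := ⟨true, false, EqvGen.refl _⟩
  rcases IsDAClass.eq_or_isDACycle (S := head) hPuniq ⟨_, hg.1, rfl⟩ with rfl | hheadc
  · exact Or.inl hhead
  rcases IsDAClass.eq_or_isDACycle (S := tail) hPuniq ⟨_, hg.1, rfl⟩ with rfl | htailc
  · exact Or.inl htail
  refine Or.inr ?_
  by_cases hheadFi : head ∈ Fi
  · by_cases htailFi : tail ∈ Fi
    · exfalso
      by_cases heq : head = tail
      · refine (hFi.1 head hheadFi).2 g fun c h => ?_
        cases c <;> cases h
        · exact daRel_coFlip hg true true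
        · exact heq ▸ daRel_coFlip hg true false
        · exact heq ▸ EqvGen.refl _
        · exact EqvGen.refl _
      · exact hFi.2 head hheadFi tail htailFi heq g ⟨hhead, htail⟩
    · exact ⟨tail, hE tail htailc htailFi, htail⟩
  · exact ⟨head, hE head hheadc hheadFi, hhead⟩

theorem indep_cycles_eq_cycles_sub_merges_general (G : Genome) (hwf : G.WF)
    (htd : G.TotDup)
    (P : Set Ext) (hP : G.IsDAPath P) (hPuniq : ∀ Q : Set Ext, G.IsDAPath Q → Q = P)
    (C m Ci : ℕ)
    (hC : C = Set.ncard {S : Set Ext | G.IsDACycle S})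
    (hm : IsLeast {k : ℕ | ∃ F : Finset (Set Ext),
        (∀ S ∈ F, G.IsDACycle S) ∧ F.card = k ∧
        ∀ g : ℕ, G.DupGene g → (ElemHasCouple P g ∨ ∃ S ∈ F, ElemHasCouple S g)} m)
    (hCi : IsGreatest
      {k : ℕ | ∃ F : Finset (Set Ext), IndepCycleFam G F ∧ F.card = k} Ci) :
    Ci = C - m := by
  classical
  have hfin := G.finite_setOf_isDACycle
  set cycles := hfin.toFinset
  have mem_cycles : ∀ S, S ∈ cycles ↔ G.IsDACycle S := fun _ => hfin.mem_toFinset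
  obtain rfl : C = cycles.card := by rw [hC, Set.ncard_eq_toFinset_card _ hfin]
  obtain ⟨F, hFcyc, rfl, hFcov⟩ := hm.1
  obtain ⟨Fi, hFi, rfl⟩ := hCi.1
  have hFsub : F ⊆ cycles := fun S hS => (mem_cycles S).2 (hFcyc S hS)
  have hFisub : Fi ⊆ cycles := fun S hS => (mem_cycles S).2 (hFi.1 S hS).1
  have hle : cycles.card - F.card ≤ Fi.card := hCi.2 ⟨cycles \ F,
    Genome.CoversCouples.indepCycleFam hwf htd hP (fun S hS => (hFcyc S hS).1) hFcov fun S hS =>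
      ⟨(mem_cycles S).1 (Finset.mem_sdiff.1 hS).1, (Finset.mem_sdiff.1 hS).2⟩,
    Finset.card_sdiff_of_subset hFsub⟩
  have hge : F.card ≤ cycles.card - Fi.card := hm.2 ⟨cycles \ Fi,
    fun S hS => (mem_cycles S).1 (Finset.mem_sdiff.1 hS).1,
    Finset.card_sdiff_of_subset hFisub,
    hFi.coversCouples hPuniq fun S hS hSFi => Finset.mem_sdiff.2 ⟨(mem_cycles S).2 hS, hSFi⟩⟩
  have := Finset.card_le_card hFisub
  omega

/-- For a unilinear totally duplicated genome `G`, whose dedoubled adjacency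
graph `A(G)` contains exactly one path `P` and `C` cycles, with `m` the
minimum number of cycles that must be merged into the path to make it valid
(i.e. so that, together with the path, they contain every couple `(x, x̄)`),
and `C_i` the maximum size of a subset of non-duplicated pairwise independent
cycles: `C_i = C − m`. -/
theorem indep_cycles_eq_cycles_sub_merges (G : Genome) (hwf : G.WF)
    (htd : G.TotDup) (huni : G.Unilinear)
    (P : Set Ext) (hP : G.IsDAPath P) (hPuniq : ∀ Q : Set Ext, G.IsDAPath Q → Q = P)
    (C m Ci : ℕ)
    (hC : C = Set.ncard {S : Set Ext | G.IsDACycle S})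
    (hm : IsLeast {k : ℕ | ∃ F : Finset (Set Ext),
        (∀ S ∈ F, G.IsDACycle S) ∧ F.card = k ∧
        ∀ g : ℕ, G.DupGene g → (ElemHasCouple P g ∨ ∃ S ∈ F, ElemHasCouple S g)} m)
    (hCi : IsGreatest
      {k : ℕ | ∃ F : Finset (Set Ext), IndepCycleFam G F ∧ F.card = k} Ci) :
    Ci = C - m :=
  indep_cycles_eq_cycles_sub_merges_general G hwf htd P hP hPuniq C m Ci hC hm hCi

end Rearr
end

section
/- Every block interchange operation on a linear chromosome is equivalent to the composition of two DCJ operations: an excision that extracts and circularizes a segment, followed by a reintegration of the resulting circular chromosome into the linear chromosome. Precisely, for a genome (∘ 1 U 2 V 3 ∘) in which the block interchange swaps the segments U and V, the first DCJ produces (∘ 1 V 3 ∘)(U 2) and the second produces (∘ 1 V 2 U 3 ∘). -/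
namespace Rearr

/-! Both steps are instances of one move, the excision of a nonempty segment `w` from
`(∘ p w s ∘)` as a circle `(w)`: it cuts the adjacencies on either side of `w` and rejoins
them as the junction of `p` with `s` and the junction of the last marker of `w` with its
first. The first step excises `u q` from `(∘ p u q v r ∘)`. The second step undoes the
excision of `q u` from `(∘ p v q u r ∘)`, which yields the same intermediate genome because
a circle does not depend on where it is read from; and undoing a DCJ is a DCJ as soon as no
adjacency joins an extremity to itself. -/

section DCJ

variable {G G' : Genome}

lemma Genome.telo.notMem_adj {e f : Ext} (he : G.telo e) : s(e, f) ∉ G.adj :=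
  fun h => he.2 ⟨_, h, Sym2.mem_mk_left _ _⟩

lemma Genome.WF.notMem_of_subset_erase (hG : G.WF) {x n : Sym2 Ext} {e : Ext}
    {M : Finset (Sym2 Ext)} (hx : x ∈ G.adj) (hex : e ∈ x) (hen : e ∈ n)
    (hM : M ⊆ G.adj.erase x) : n ∉ M := fun hn =>
  Finset.ne_of_mem_erase (hM hn) (hG.2 _ (Finset.mem_of_mem_erase (hM hn)) _ hx _ hen hex)

lemma Genome.WF.telo_of_subset_erase (hG : G.WF) {x : Sym2 Ext} {e : Ext} (hx : x ∈ G.adj)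
    (hex : e ∈ x) (hsub : G'.adj ⊆ G.adj.erase x) (hocc : G.occs = G'.occs) : G'.telo e :=
  ⟨hocc ▸ hG.1 x hx e hex,
    fun ⟨_, hq, heq⟩ => hG.notMem_of_subset_erase hx hex heq hsub hq⟩

lemma Genome.WF.reverse_two_cut (hG : G.WF) (hloop : ∀ e, s(e, e) ∉ G.adj) {a b c d : Ext}
    (hab : s(a, b) ∈ G.adj) (hcd : s(c, d) ∈ G.adj) (hne : s(a, b) ≠ s(c, d))
    {A : Finset (Sym2 Ext)}
    (hA : A = insert s(a, c) (insert s(b, d) ((G.adj.erase s(a, b)).erase s(c, d)))) :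
    s(a, c) ∈ A ∧ s(b, d) ∈ A ∧ s(a, c) ≠ s(b, d) ∧
      G.adj = insert s(a, b) (insert s(c, d) ((A.erase s(a, c)).erase s(b, d))) := by
  have hac_bd : s(a, c) ≠ s(b, d) := by
    rw [Ne, Sym2.eq_iff]
    rintro (⟨rfl, rfl⟩ | ⟨rfl, rfl⟩)
    exacts [hloop a hab, hne Sym2.eq_swap]
  have hac : s(a, c) ∉ (G.adj.erase s(a, b)).erase s(c, d) :=
    hG.notMem_of_subset_erase hab (Sym2.mem_mk_left a b) (Sym2.mem_mk_left a c)
      (Finset.erase_subset _ _)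
  have hbd : s(b, d) ∉ (G.adj.erase s(a, b)).erase s(c, d) :=
    hG.notMem_of_subset_erase hcd (Sym2.mem_mk_right c d) (Sym2.mem_mk_right b d)
      (Finset.erase_right_comm (a := s(a, b)) ▸ Finset.erase_subset _ _)
  refine ⟨by simp [hA], by simp [hA], hac_bd, ?_⟩
  rw [hA, Finset.erase_insert (by simp [hac_bd, hac]), Finset.erase_insert hbd,
    Finset.insert_erase (Finset.mem_erase.2 ⟨hne.symm, hcd⟩), Finset.insert_erase hab]

/-- `WF` allows a degenerate adjacency `(e e)`, and the DCJ turning `(e e) (f g)` into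
`(e f) (e g)` cannot be undone. -/
theorem IsDCJ.symm (h : IsDCJ G G') (hloop : ∀ e, s(e, e) ∉ G.adj) : IsDCJ G' G := by
  obtain ⟨hG, hG', hocc, h⟩ := h
  refine ⟨hG', hG, hocc.symm, ?_⟩
  rcases h with ⟨a, b, c, d, hab, hcd, hne, hG'adj | hG'adj⟩ | ⟨a, b, c, hab, hc, hG'adj⟩ |
    ⟨a, b, hab, hG'adj⟩ | ⟨a, b, ha, hb, hne, hG'adj⟩
  · obtain ⟨h₁, h₂, h₃, h₄⟩ := hG.reverse_two_cut hloop hab hcd hne hG'adj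
    exact Or.inl ⟨a, c, b, d, h₁, h₂, h₃, Or.inl h₄⟩
  · rw [Sym2.eq_swap (a := c)] at hcd hne hG'adj
    obtain ⟨h₁, h₂, h₃, h₄⟩ := hG.reverse_two_cut hloop hab hcd hne hG'adj
    exact Or.inl ⟨a, d, b, c, h₁, h₂, h₃, Or.inl h₄⟩
  · refine Or.inr (Or.inl ⟨a, c, b, by simp [hG'adj],
      ⟨hocc ▸ hG.1 _ hab b (Sym2.mem_mk_right a b), fun ⟨q, hq, hbq⟩ => ?_⟩, ?_⟩)
    · rw [hG'adj, Finset.mem_insert] at hq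
      rcases hq with rfl | hq
      · rcases Sym2.mem_iff.1 hbq with rfl | rfl
        exacts [hloop b hab, hc.notMem_adj (Sym2.eq_swap ▸ hab)]
      · exact hG.notMem_of_subset_erase hab (Sym2.mem_mk_right a b) hbq subset_rfl hq
    · rw [hG'adj, Finset.erase_insert fun h =>
        hc.notMem_adj (Sym2.eq_swap ▸ Finset.mem_of_mem_erase h), Finset.insert_erase hab]
  · have hsub : G'.adj ⊆ G.adj.erase s(a, b) := hG'adj.le
    refine Or.inr (Or.inr (Or.inr ⟨a, b,
      hG.telo_of_subset_erase hab (Sym2.mem_mk_left a b) hsub hocc,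
      hG.telo_of_subset_erase hab (Sym2.mem_mk_right a b) hsub hocc, ?_, ?_⟩))
    · rintro rfl
      exact hloop a hab
    · rw [hG'adj, Finset.insert_erase hab]
  · refine Or.inr (Or.inr (Or.inl ⟨a, b, by simp [hG'adj], ?_⟩))
    rw [hG'adj, Finset.erase_insert ha.notMem_adj]

end DCJ

section WellFormed

variable {G G₁ G₂ : Genome}

lemma Genome.WF.mono_occs (hG : G.WF) {O : Finset Occ} (hO : G.occs ⊆ O) :
    Genome.WF ⟨O, G.adj⟩ :=
  ⟨fun q hq e he => hO (hG.1 q hq e he), hG.2⟩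

lemma Genome.WF.insert_telo (hG : G.WF) {a b : Ext} (ha : G.telo a) (hb : G.telo b) :
    Genome.WF ⟨G.occs, insert s(a, b) G.adj⟩ := by
  have new_or_old {q : Sym2 Ext} (hq : q ∈ insert s(a, b) G.adj) {e : Ext} (he : e ∈ q) :
      q = s(a, b) ∨ (q ∈ G.adj ∧ e ≠ a ∧ e ≠ b) := by
    rcases Finset.mem_insert.1 hq with rfl | hqG
    · exact Or.inl rfl
    · refine Or.inr ⟨hqG, ?_, ?_⟩ <;> rintro rfl
      exacts [ha.2 ⟨q, hqG, he⟩, hb.2 ⟨q, hqG, he⟩]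
  refine ⟨fun q hq e he => ?_, fun q hq q' hq' e he he' => ?_⟩
  · rcases new_or_old hq he with rfl | ⟨hq, -⟩
    · rcases Sym2.mem_iff.1 he with rfl | rfl
      exacts [ha.1, hb.1]
    · exact hG.1 q hq e he
  · rcases new_or_old hq he with rfl | ⟨hq, hea, heb⟩ <;>
      rcases new_or_old hq' he' with rfl | ⟨hq', hea', heb'⟩
    · rfl
    · rcases Sym2.mem_iff.1 he with rfl | rfl <;> simp_all
    · rcases Sym2.mem_iff.1 he' with rfl | rfl <;> simp_all
    · exact hG.2 q hq q' hq' e he he'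

lemma Genome.WF.union (h₁ : G₁.WF) (h₂ : G₂.WF) (hd : Disjoint G₁.occs G₂.occs) :
    Genome.WF ⟨G₁.occs ∪ G₂.occs, G₁.adj ∪ G₂.adj⟩ := by
  refine ⟨fun q hq e he => ?_, fun q hq q' hq' e he he' => ?_⟩
  · rcases Finset.mem_union.1 hq with hq | hq
    exacts [Finset.mem_union_left _ (h₁.1 q hq e he), Finset.mem_union_right _ (h₂.1 q hq e he)]
  · rcases Finset.mem_union.1 hq with hq | hq <;> rcases Finset.mem_union.1 hq' with hq' | hq'
    · exact h₁.2 q hq q' hq' e he he'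
    · exact (Finset.disjoint_left.1 hd (h₁.1 q hq e he) (h₂.1 q' hq' e he')).elim
    · exact (Finset.disjoint_left.1 hd (h₁.1 q' hq' e he') (h₂.1 q hq e he)).elim
    · exact h₂.2 q hq q' hq' e he he'

end WellFormed

/-- `none` stands for a chromosome end, next to which there is no adjacency. -/
def junction : Option Mk → Option Mk → Finset (Sym2 Ext)
  | some x, some y => {s(rExt x, lExt y)}
  | _, _ => ∅

@[simp] lemma junction_none_left (y : Option Mk) : junction none y = ∅ := rfl

@[simp] lemma junction_none_right (x : Option Mk) : junction x none = ∅ := by cases x <;> rfl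

@[simp] lemma junction_some_some (x y : Mk) :
    junction (some x) (some y) = {s(rExt x, lExt y)} := rfl

lemma mem_junction {x y : Option Mk} {q : Sym2 Ext} :
    q ∈ junction x y ↔ ∃ x' y', x = some x' ∧ y = some y' ∧ q = s(rExt x', lExt y') := by
  cases x <;> cases y <;> simp

lemma linAdj_cons (x : Mk) (t : List Mk) :
    linAdj (x :: t) = junction (some x) t.head? ∪ linAdj t := by
  cases t with
  | nil => rfl
  | cons y t => exact Finset.insert_eq _ _

lemma linAdj_append (a b : List Mk) :
    linAdj (a ++ b) = linAdj a ∪ junction a.getLast? b.head? ∪ linAdj b := by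
  induction a with
  | nil => simp [linAdj]
  | cons x t ih =>
    rw [List.cons_append, linAdj_cons, ih, linAdj_cons]
    cases t with
    | nil => cases b <;> simp [linAdj, Finset.union_comm]
    | cons y t => simp [Finset.union_assoc]

lemma circAdj_eq (w : List Mk) : circAdj w = junction w.getLast? w.head? ∪ linAdj w := by
  cases w with
  | nil => rfl
  | cons x t =>
    rw [circAdj, List.getLast?_eq_some_getLast (List.cons_ne_nil x t)]
    exact Finset.insert_eq _ _

lemma circAdj_eq_insert {w : List Mk} (hw : w ≠ []) :
    circAdj w = insert s(rExt (w.getLast hw), lExt (w.head hw)) (linAdj w) := by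
  rw [circAdj_eq, List.getLast?_eq_some_getLast hw, List.head?_eq_some_head hw,
    junction_some_some, Finset.insert_eq]

lemma circAdj_append_comm (a b : List Mk) : circAdj (a ++ b) = circAdj (b ++ a) := by
  rcases eq_or_ne a [] with rfl | ha
  · simp
  rcases eq_or_ne b [] with rfl | hb
  · simp
  simp only [circAdj_eq, linAdj_append, List.getLast?_append, List.head?_append,
    List.getLast?_eq_some_getLast ha, List.getLast?_eq_some_getLast hb,
    List.head?_eq_some_head ha, List.head?_eq_some_head hb, Option.some_or]
  ac_rfl

lemma linAdj_append_append {p w s : List Mk} (hw : w ≠ []) :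
    linAdj (p ++ w ++ s) = linAdj p ∪ linAdj w ∪ linAdj s ∪
      junction p.getLast? (some (w.head hw)) ∪ junction (some (w.getLast hw)) s.head? := by
  rw [linAdj_append, linAdj_append, List.getLast?_append, List.getLast?_eq_some_getLast hw,
    List.head?_eq_some_head hw, Option.some_or]
  ac_rfl

lemma linAdj_append_union_circAdj {p w s : List Mk} (hw : w ≠ []) :
    linAdj (p ++ s) ∪ circAdj w = linAdj p ∪ linAdj w ∪ linAdj s ∪
      junction p.getLast? s.head? ∪ junction (some (w.getLast hw)) (some (w.head hw)) := by
  rw [linAdj_append, circAdj_eq, List.getLast?_eq_some_getLast hw, List.head?_eq_some_head hw]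
  ac_rfl

lemma exists_of_mem_linAdj {l : List Mk} {q : Sym2 Ext} (hq : q ∈ linAdj l) :
    ∃ x ∈ l, ∃ y ∈ l, q = s(rExt x, lExt y) := by
  induction l with
  | nil => simp [linAdj] at hq
  | cons x t ih =>
    rw [linAdj_cons, Finset.mem_union, mem_junction] at hq
    rcases hq with ⟨_, y, ⟨⟩, hy, rfl⟩ | hq
    · exact ⟨x, by simp, y, by simp [List.mem_of_head? hy], rfl⟩
    · obtain ⟨x', hx', y', hy', rfl⟩ := ih hq
      exact ⟨x', by simp [hx'], y', by simp [hy'], rfl⟩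

lemma fst_mem_of_mem_linAdj {l : List Mk} {q : Sym2 Ext} (hq : q ∈ linAdj l) {e : Ext}
    (he : e ∈ q) : e.1 ∈ l.map mOcc := by
  obtain ⟨x, hx, y, hy, rfl⟩ := exists_of_mem_linAdj hq
  rcases Sym2.mem_iff.1 he with rfl | rfl
  exacts [List.mem_map_of_mem hx, List.mem_map_of_mem hy]

lemma mem_occsOf {l : List Mk} {m : Mk} (hm : m ∈ l) : mOcc m ∈ occsOf l :=
  List.mem_toFinset.2 (List.mem_map_of_mem hm)

lemma occsOf_eq_of_perm {l l' : List Mk} (h : l.Perm l') : occsOf l = occsOf l' :=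
  List.toFinset_eq_of_perm _ _ (h.map mOcc)


lemma rExt_ne_lExt_self (m : Mk) : rExt m ≠ lExt m := by
  simp [rExt, lExt]

lemma rExt_ne_lExt {L : List Mk} (hL : (L.map mOcc).Nodup) {x y : Mk} (hx : x ∈ L)
    (hy : y ∈ L) : rExt x ≠ lExt y := by
  intro h
  obtain rfl := List.inj_on_of_nodup_map hL hx hy (congrArg Prod.fst h)
  exact rExt_ne_lExt_self x h

lemma loop_notMem_linAdj {l : List Mk} (hl : (l.map mOcc).Nodup) (e : Ext) :
    s(e, e) ∉ linAdj l := fun he => by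
  obtain ⟨x, hx, y, hy, h⟩ := exists_of_mem_linAdj he
  exact rExt_ne_lExt hl hx hy (Sym2.mk_isDiag_iff.1 (h ▸ Sym2.mk_isDiag_iff.2 rfl))

lemma lExt_head_notMem_linAdj {l : List Mk} (hl : (l.map mOcc).Nodup) (hne : l ≠ [])
    {q : Sym2 Ext} (hq : q ∈ linAdj l) : lExt (l.head hne) ∉ q := by
  obtain ⟨x, t, rfl⟩ := List.exists_cons_of_ne_nil hne
  rw [List.map_cons, List.nodup_cons] at hl
  intro hxq
  rw [linAdj_cons, Finset.mem_union, mem_junction] at hq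
  rcases hq with ⟨_, y, ⟨⟩, hy, rfl⟩ | hq
  · rcases Sym2.mem_iff.1 hxq with h | h
    · exact rExt_ne_lExt_self x h.symm
    · have hxy : mOcc x = mOcc y := congrArg Prod.fst h
      exact hl.1 (hxy ▸ List.mem_map_of_mem (List.mem_of_head? hy))
  · exact hl.1 (fst_mem_of_mem_linAdj hq hxq)

lemma rExt_getLast_notMem_linAdj {l : List Mk} (hl : (l.map mOcc).Nodup) (hne : l ≠ [])
    {q : Sym2 Ext} (hq : q ∈ linAdj l) : rExt (l.getLast hne) ∉ q := by
  obtain ⟨t, x, rfl⟩ : ∃ t x, l = t ++ [x] :=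
    ⟨_, _, (List.dropLast_append_getLast hne).symm⟩
  rw [List.map_append, List.nodup_append] at hl
  have hx : mOcc x ∉ t.map mOcc := fun h => hl.2.2 _ h _ (List.mem_singleton_self _) rfl
  rw [List.getLast_append_singleton]
  intro hxq
  rw [linAdj_append, Finset.mem_union, Finset.mem_union, mem_junction] at hq
  rcases hq with (hq | ⟨y, _, hy, ⟨⟩, rfl⟩) | hq
  · exact hx (fst_mem_of_mem_linAdj hq hxq)
  · rcases Sym2.mem_iff.1 hxq with h | h
    · have hxy : mOcc x = mOcc y := congrArg Prod.fst h
      exact hx (hxy ▸ List.mem_map_of_mem (List.mem_of_getLast? hy))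
    · exact rExt_ne_lExt_self x h
  · simp [linAdj] at hq

lemma linGenome_wf {l : List Mk} (hl : (l.map mOcc).Nodup) : (linGenome l).WF := by
  induction l with
  | nil => exact ⟨by simp [linGenome, linAdj], by simp [linGenome, linAdj]⟩
  | cons x t ih =>
    rw [List.map_cons, List.nodup_cons] at hl
    cases t with
    | nil => exact ⟨by simp [linGenome, linAdj], by simp [linGenome, linAdj]⟩
    | cons y t =>
      have hsub : occsOf (y :: t) ⊆ occsOf (x :: y :: t) := by simp [occsOf]
      refine ((ih hl.2).mono_occs hsub).insert_telo ⟨mem_occsOf (by simp), ?_⟩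
        ⟨mem_occsOf (by simp), ?_⟩
      · exact fun ⟨q, hq, hxq⟩ => hl.1 (fst_mem_of_mem_linAdj hq hxq)
      · exact fun ⟨q, hq, hyq⟩ => lExt_head_notMem_linAdj hl.2 (List.cons_ne_nil y t) hq hyq

lemma circGenome_wf {w : List Mk} (hw : (w.map mOcc).Nodup) : (circGenome w).WF := by
  rcases eq_or_ne w [] with rfl | hne
  · exact linGenome_wf hw
  rw [circGenome, circAdj_eq_insert hne]
  refine (linGenome_wf hw).insert_telo ⟨mem_occsOf (List.getLast_mem hne), ?_⟩
    ⟨mem_occsOf (List.head_mem hne), ?_⟩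
  · exact fun ⟨q, hq, h⟩ => rExt_getLast_notMem_linAdj hw hne hq h
  · exact fun ⟨q, hq, h⟩ => lExt_head_notMem_linAdj hw hne hq h

lemma wf_linAdj_union_circAdj {l w : List Mk} (hnd : ((l ++ w).map mOcc).Nodup) :
    Genome.WF ⟨occsOf (l ++ w), linAdj l ∪ circAdj w⟩ := by
  rw [List.map_append, List.nodup_append] at hnd
  have hdisj : Disjoint (occsOf l) (occsOf w) := Finset.disjoint_left.2 fun o hl hw =>
    hnd.2.2 o (List.mem_toFinset.1 hl) o (List.mem_toFinset.1 hw) rfl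
  rw [occsOf, List.map_append, List.toFinset_append]
  exact (linGenome_wf hnd.1).union (circGenome_wf hnd.2.1) hdisj


/-- The DCJ `(x a) (b y) → (x y) (b a)`, where a missing neighbour `x` or `y` (`none`) is a
chromosome end. -/
theorem isDCJ_rejoin {G K : Genome} (hG : G.WF) (hK : K.WF) (hocc : G.occs = K.occs)
    {R : Finset (Sym2 Ext)} {x y : Option Mk} {a b : Mk}
    (hGadj : G.adj = R ∪ junction x (some a) ∪ junction (some b) y)
    (hKadj : K.adj = R ∪ junction x y ∪ junction (some b) (some a))
    (ha : ∀ q ∈ R, lExt a ∉ q) (hb : ∀ q ∈ R, rExt b ∉ q) (hab : rExt b ≠ lExt a)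
    (hx : ∀ x' ∈ x, rExt x' ≠ rExt b) (hy : ∀ y' ∈ y, lExt y' ≠ lExt a)
    (ha' : mOcc a ∈ G.occs) (hb' : mOcc b ∈ G.occs) : IsDCJ G K := by
  refine ⟨hG, hK, hocc, ?_⟩
  have haR : ∀ {e}, s(e, lExt a) ∉ R := fun h => ha _ h (Sym2.mem_mk_right _ _)
  have hbR : ∀ {e}, s(rExt b, e) ∉ R := fun h => hb _ h (Sym2.mem_mk_left _ _)
  rcases x with _ | x <;> rcases y with _ | y <;>
    simp only [junction_none_left, junction_none_right, junction_some_some, Finset.union_empty,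
      Finset.union_singleton] at hGadj hKadj
  · refine Or.inr (Or.inr (Or.inr ⟨rExt b, lExt a,
      ⟨hb', fun ⟨q, hq, h⟩ => hb q (hGadj ▸ hq) h⟩, ⟨ha', fun ⟨q, hq, h⟩ => ha q (hGadj ▸ hq) h⟩,
      hab, by rw [hKadj, hGadj]⟩))
  · refine Or.inr (Or.inl ⟨rExt b, lExt y, lExt a, by simp [hGadj],
      ⟨ha', fun ⟨q, hq, h⟩ => ?_⟩, by rw [hKadj, hGadj, Finset.erase_insert hbR]⟩)
    rw [hGadj, Finset.mem_insert] at hq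
    rcases hq with rfl | hq
    · rcases Sym2.mem_iff.1 h with h | h
      exacts [hab h.symm, hy y rfl h.symm]
    · exact ha q hq h
  · refine Or.inr (Or.inl ⟨lExt a, rExt x, rExt b, by simp [hGadj, Sym2.eq_swap],
      ⟨hb', fun ⟨q, hq, h⟩ => ?_⟩, ?_⟩)
    · rw [hGadj, Finset.mem_insert] at hq
      rcases hq with rfl | hq
      · rcases Sym2.mem_iff.1 h with h | h
        exacts [hx x rfl h.symm, hab h]
      · exact hb q hq h
    · rw [hKadj, hGadj, Sym2.eq_swap (a := lExt a), Sym2.eq_swap (a := lExt a),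
        Finset.erase_insert haR]
  · have hne : s(rExt x, lExt a) ≠ s(rExt b, lExt y) := fun h => by
      rcases Sym2.mem_iff.1 (h ▸ Sym2.mem_mk_right (rExt x) (lExt a)) with h | h
      exacts [hab h.symm, hy y rfl h.symm]
    refine Or.inl ⟨rExt x, lExt a, rExt b, lExt y, by simp [hGadj], by simp [hGadj], hne,
      Or.inr ?_⟩
    rw [hKadj, hGadj, Finset.erase_insert_of_ne hne.symm, Finset.erase_insert haR,
      Finset.erase_insert hbR, Finset.insert_comm, Sym2.eq_swap (a := lExt a)]

theorem isDCJ_excision {p w s : List Mk} (hw : w ≠ []) (hnd : ((p ++ w ++ s).map mOcc).Nodup) :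
    IsDCJ (linGenome (p ++ w ++ s)) ⟨occsOf (p ++ w ++ s), linAdj (p ++ s) ∪ circAdj w⟩ := by
  have hsplit := hnd
  rw [List.append_assoc, List.map_append, List.map_append, List.nodup_append,
    List.nodup_append] at hsplit
  obtain ⟨-, ⟨hwn, -, hw_s⟩, hp_ws⟩ := hsplit
  have hpw : ∀ o ∈ p.map mOcc, o ∉ w.map mOcc := fun o ho ho' =>
    hp_ws o ho o (List.mem_append_left _ ho') rfl
  have hws : ∀ o ∈ w.map mOcc, o ∉ s.map mOcc := fun o ho ho' => hw_s o ho o ho' rfl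
  have hK : Genome.WF ⟨occsOf (p ++ w ++ s), linAdj (p ++ s) ∪ circAdj w⟩ := by
    have hperm : (p ++ w ++ s).Perm (p ++ s ++ w) := by
      simpa only [List.append_assoc] using List.perm_append_comm.append_left p
    rw [occsOf_eq_of_perm hperm]
    exact wf_linAdj_union_circAdj ((hperm.map mOcc).nodup_iff.1 hnd)
  have ha := List.head_mem hw
  have hb := List.getLast_mem hw
  refine isDCJ_rejoin (linGenome_wf hnd) hK rfl (linAdj_append_append hw)
    (linAdj_append_union_circAdj hw) ?_ ?_ (rExt_ne_lExt hwn hb ha)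
    (fun x hx h => hpw _ (List.mem_map_of_mem (List.mem_of_getLast? hx))
      ((show mOcc x = mOcc (w.getLast hw) from congrArg Prod.fst h) ▸ List.mem_map_of_mem hb))
    (fun y hy h => hws _ (List.mem_map_of_mem ha)
      ((show mOcc y = mOcc (w.head hw) from congrArg Prod.fst h) ▸
        List.mem_map_of_mem (List.mem_of_head? hy)))
    (mem_occsOf (by simp [ha])) (mem_occsOf (by simp [hb]))
  · simp only [Finset.mem_union]
    rintro q ((hq | hq) | hq) h
    · exact hpw _ (fst_mem_of_mem_linAdj hq h) (List.mem_map_of_mem ha)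
    · exact lExt_head_notMem_linAdj hwn hw hq h
    · exact hws _ (List.mem_map_of_mem ha) (fst_mem_of_mem_linAdj hq h)
  · simp only [Finset.mem_union]
    rintro q ((hq | hq) | hq) h
    · exact hpw _ (fst_mem_of_mem_linAdj hq h) (List.mem_map_of_mem hb)
    · exact rExt_getLast_notMem_linAdj hwn hw hq h
    · exact hws _ (List.mem_map_of_mem hb) (fst_mem_of_mem_linAdj hq h)


theorem block_interchange_as_two_dcj_general (p u q v r : List Mk)
    (hu : u ≠ [])
    (hnd : ((p ++ u ++ q ++ v ++ r).map mOcc).Nodup) :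
    IsDCJ (linGenome (p ++ u ++ q ++ v ++ r))
      ⟨occsOf (p ++ u ++ q ++ v ++ r), linAdj (p ++ v ++ r) ∪ circAdj (u ++ q)⟩ ∧
    IsDCJ ⟨occsOf (p ++ u ++ q ++ v ++ r), linAdj (p ++ v ++ r) ∪ circAdj (u ++ q)⟩
      (linGenome (p ++ v ++ q ++ u ++ r)) ∧
    Scen IsDCJ 2 (linGenome (p ++ u ++ q ++ v ++ r))
      (linGenome (p ++ v ++ q ++ u ++ r)) := by
  have hperm : (p ++ u ++ q ++ v ++ r).Perm (p ++ v ++ (q ++ u) ++ r) :=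
    List.perm_iff_count.2 fun m => by simp only [List.count_append]; omega
  have hnd' := (hperm.map mOcc).nodup_iff.1 hnd
  have hexcise : IsDCJ (linGenome (p ++ u ++ q ++ v ++ r))
      ⟨occsOf (p ++ u ++ q ++ v ++ r), linAdj (p ++ v ++ r) ∪ circAdj (u ++ q)⟩ := by
    simpa only [List.append_assoc] using
      isDCJ_excision (p := p) (s := v ++ r) (List.append_ne_nil_of_left_ne_nil hu q)
        (by simpa only [List.append_assoc] using hnd)
  have hreintegrate : IsDCJ ⟨occsOf (p ++ u ++ q ++ v ++ r),
      linAdj (p ++ v ++ r) ∪ circAdj (u ++ q)⟩ (linGenome (p ++ v ++ q ++ u ++ r)) := by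
    rw [occsOf_eq_of_perm hperm, circAdj_append_comm]
    simpa only [List.append_assoc] using
      (isDCJ_excision (List.append_ne_nil_of_right_ne_nil q hu) hnd').symm
        (loop_notMem_linAdj hnd')
  exact ⟨hexcise, hreintegrate, _, hexcise, _, hreintegrate, rfl⟩

/-- Every block interchange on a linear chromosome, swapping the segments `u`
and `v` of the chromosome `(∘ p u q v r ∘)`, is equivalent to the composition
of two DCJ operations: an excision producing `(∘ p v r ∘)(u q)`, which
extracts and circularizes the segment `[u ; q]`, followed by the reintegration
of the circular chromosome producing `(∘ p v q u r ∘)`. -/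
theorem block_interchange_as_two_dcj (p u q v r : List Mk)
    (hu : u ≠ []) (hv : v ≠ [])
    (hnd : ((p ++ u ++ q ++ v ++ r).map mOcc).Nodup) :
    IsDCJ (linGenome (p ++ u ++ q ++ v ++ r))
      ⟨occsOf (p ++ u ++ q ++ v ++ r), linAdj (p ++ v ++ r) ∪ circAdj (u ++ q)⟩ ∧
    IsDCJ ⟨occsOf (p ++ u ++ q ++ v ++ r), linAdj (p ++ v ++ r) ∪ circAdj (u ++ q)⟩
      (linGenome (p ++ v ++ q ++ u ++ r)) ∧
    Scen IsDCJ 2 (linGenome (p ++ u ++ q ++ v ++ r))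
      (linGenome (p ++ v ++ q ++ u ++ r)) :=
  block_interchange_as_two_dcj_general p u q v r hu hnd

end Rearr
end

section
/- Let G be a totally duplicated genome consisting of a single linear chromosome with n distinct markers, and let C be the number of cycles of the natural graph NG(G). Then the minimal number of DCJ operations transforming G into a 1-tandem duplicated genome satisfies d^t_DCJ(G) ≥ n − C − 1. -/
/-!
A DCJ creates at most one new cycle of the natural graph. A new cycle must use one of the new
adjacencies, of which there are at most two; and when cutting `(a b)`, `(c d)` and joining
`(a c)`, `(b d)` creates two new cycles, the cycle of `NG(G)` through `(a b)` and `(c d)` is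
destroyed. On the other side, in a 1-tandem genome `(∘ w w̄ ∘)` each of the `n - 1` adjacencies
of `w` forms, together with its paralog in `w̄`, a cycle of the natural graph. Hence
`n - 1 ≤ C + d` for a scenario of length `d`.
-/

namespace Rearr

@[simp] lemma flipCopy_flipCopy (e : Ext) : flipCopy (flipCopy e) = e := by
  simp [flipCopy]

namespace Genome

variable {G G' : Genome} {e f g x : Ext} {S T : Set Ext}

def NGStep (G : Genome) (e f : Ext) : Prop :=
  s(e, f) ∈ G.adj ∨ (f = flipCopy e ∧ e.1 ∈ G.occs ∧ f.1 ∈ G.occs)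

instance (G : Genome) : Std.Symm G.NGStep where
  symm e f := by
    rintro (h | ⟨rfl, he, hf⟩)
    · exact Or.inl (Sym2.eq_swap ▸ h)
    · exact Or.inr ⟨(flipCopy_flipCopy e).symm, hf, he⟩

lemma ngRel_iff_reflTransGen : G.ngRel e f ↔ Relation.ReflTransGen G.NGStep e f := by
  change Relation.EqvGen G.NGStep e f ↔ _
  rw [Relation.EqvGen.eqvGen_eq_reflTransGen]

def ngClass (G : Genome) (e : Ext) : Set Ext := {f | G.ngRel e f}

lemma mem_ngClass_self (G : Genome) (e : Ext) : e ∈ G.ngClass e :=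
  Relation.EqvGen.refl e

lemma mem_ngClass_of_step (hf : f ∈ G.ngClass e) (h : G.NGStep f g) : g ∈ G.ngClass e :=
  Relation.EqvGen.trans _ _ _ hf (Relation.EqvGen.rel _ _ h)

lemma ngClass_eq_of_mem (h : f ∈ G.ngClass e) : G.ngClass f = G.ngClass e := by
  ext x
  exact ⟨Relation.EqvGen.trans _ _ _ h, Relation.EqvGen.trans _ _ _ (Relation.EqvGen.symm _ _ h)⟩

lemma ngClass_subset_of_closed (he : e ∈ S) (hS : ∀ f ∈ S, ∀ g, G.NGStep f g → g ∈ S) :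
    G.ngClass e ⊆ S := by
  intro x hx
  replace hx := ngRel_iff_reflTransGen.1 hx
  induction hx with
  | refl => exact he
  | tail _ hstep ih => exact hS _ ih _ hstep

lemma IsNGClass.eq_ngClass (hS : G.IsNGClass S) (hx : x ∈ S) : S = G.ngClass x := by
  obtain ⟨e, -, rfl⟩ := hS
  exact (ngClass_eq_of_mem hx).symm

lemma IsNGClass.eq_of_mem (hS : G.IsNGClass S) (hT : G.IsNGClass T) (hxS : x ∈ S)
    (hxT : x ∈ T) : S = T :=
  (hS.eq_ngClass hxS).trans (hT.eq_ngClass hxT).symm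

lemma IsNGClass.mem_of_step (hS : G.IsNGClass S) (hf : f ∈ S) (h : G.NGStep f g) : g ∈ S := by
  rw [hS.eq_ngClass hf]
  exact mem_ngClass_of_step (G.mem_ngClass_self f) h

lemma finite_setOf_isNGCycle (G : Genome) : {S : Set Ext | G.IsNGCycle S}.Finite := by
  refine ((G.occs ×ˢ (Finset.univ : Finset Bool) : Finset Ext).finite_toSet.image
    G.ngClass).subset ?_
  rintro S ⟨⟨e, he, rfl⟩, -⟩
  exact ⟨e, by simp [he], rfl⟩

lemma ngClass_eq_of_step_iff (h : ∀ f ∈ G'.ngClass e, ∀ g, G.NGStep f g ↔ G'.NGStep f g) :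
    G.ngClass e = G'.ngClass e := by
  refine (ngClass_subset_of_closed (G'.mem_ngClass_self e) fun f hf g hfg =>
    mem_ngClass_of_step hf ((h f hf g).1 hfg)).antisymm fun x hx => ?_
  replace hx := ngRel_iff_reflTransGen.1 hx
  induction hx with
  | refl => exact G.mem_ngClass_self e
  | @tail f g hpath hstep ih =>
    exact mem_ngClass_of_step ih ((h f (ngRel_iff_reflTransGen.2 hpath) g).2 hstep)

def newNGCycles (G G' : Genome) : Set (Set Ext) :=
  {S | G'.IsNGCycle S ∧ ¬ G.IsNGCycle S}

lemma IsNGCycle.of_adj_subset (hG : G.WF) (hocc : G'.occs = G.occs) (hS : G'.IsNGCycle S)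
    (hold : ∀ p ∈ G'.adj, (∀ x ∈ p, x ∈ S) → p ∈ G.adj) : G.IsNGCycle S := by
  obtain ⟨⟨e, he, rfl⟩, hmatched⟩ := hS
  change ∀ f ∈ G'.ngClass e, G'.matched f at hmatched
  have hold' : ∀ f ∈ G'.ngClass e, ∀ g, s(f, g) ∈ G'.adj → s(f, g) ∈ G.adj := by
    refine fun f hf g hfg => hold _ hfg fun x hx => ?_
    rcases Sym2.mem_iff.1 hx with rfl | rfl
    exacts [hf, mem_ngClass_of_step hf (Or.inl hfg)]
  have hstep : ∀ f ∈ G'.ngClass e, ∀ g, G.NGStep f g ↔ G'.NGStep f g := by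
    intro f hf g
    refine or_congr ⟨fun hfg => ?_, hold' f hf g⟩ (by rw [hocc])
    obtain ⟨p, hp, hfp⟩ := hmatched f hf
    obtain ⟨g', rfl⟩ := Sym2.mem_iff_exists.1 hfp
    rwa [hG.2 _ hfg _ (hold' f hf g' hp) f (Sym2.mem_mk_left _ _) (Sym2.mem_mk_left _ _)]
  refine ⟨⟨e, hocc ▸ he, (ngClass_eq_of_step_iff hstep).symm⟩, fun f hf => ?_⟩
  obtain ⟨p, hp, hfp⟩ := hmatched f hf
  obtain ⟨g, rfl⟩ := Sym2.mem_iff_exists.1 hfp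
  exact ⟨_, hold' f hf g hp, hfp⟩

lemma exists_new_adj_of_mem_newNGCycles (hG : G.WF) (hocc : G'.occs = G.occs)
    (hS : S ∈ newNGCycles G G') : ∃ p ∈ G'.adj \ G.adj, ∀ x ∈ p, x ∈ S := by
  by_contra! h
  refine hS.2 (hS.1.of_adj_subset hG hocc fun p hp hpS => ?_)
  by_contra hpG
  obtain ⟨x, hx, hxS⟩ := h p (Finset.mem_sdiff.2 ⟨hp, hpG⟩)
  exact hxS (hpS x hx)

lemma ncard_newNGCycles_le (hG : G.WF) (hocc : G'.occs = G.occs) :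
    (newNGCycles G G').ncard ≤ (G'.adj \ G.adj).card := by
  let classOf : Sym2 Ext → Set Ext := fun p => G'.ngClass p.out.1
  calc (newNGCycles G G').ncard
      ≤ (classOf '' ((G'.adj \ G.adj : Finset (Sym2 Ext)) : Set (Sym2 Ext))).ncard := by
        refine Set.ncard_le_ncard (fun S hS => ?_) (Set.toFinite _)
        obtain ⟨p, hp, hpS⟩ := exists_new_adj_of_mem_newNGCycles hG hocc hS
        exact ⟨p, hp, (hS.1.1.eq_ngClass (hpS _ p.out_fst_mem)).symm⟩
    _ ≤ (G'.adj \ G.adj).card :=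
        (Set.ncard_image_le (Set.toFinite _)).trans_eq (Set.ncard_coe_finset _)

lemma ngCycleCount_le_ncard_inter_add_ncard_newNGCycles (G G' : Genome) :
    G'.ngCycleCount ≤ ({S | G'.IsNGCycle S} ∩ {S | G.IsNGCycle S}).ncard +
      (newNGCycles G G').ncard := by
  have h := Set.ncard_union_le ({S | G'.IsNGCycle S} ∩ {S | G.IsNGCycle S})
    ({S | G'.IsNGCycle S} \ {S | G.IsNGCycle S})
  rwa [Set.inter_union_sdiff] at h

lemma ngCycleCount_le_add_of_ncard_newNGCycles_le {k : ℕ}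
    (h : (newNGCycles G G').ncard ≤ k) : G'.ngCycleCount ≤ G.ngCycleCount + k := by
  have hkept : ({S | G'.IsNGCycle S} ∩ {S | G.IsNGCycle S}).ncard ≤ G.ngCycleCount :=
    Set.ncard_le_ncard Set.inter_subset_right G.finite_setOf_isNGCycle
  have := ngCycleCount_le_ncard_inter_add_ncard_newNGCycles G G'
  omega

lemma ngCycleCount_le_add_of_ncard_newNGCycles_le_succ {k : ℕ} {Z : Set Ext}
    (hZ : G.IsNGCycle Z) (hZ' : ¬ G'.IsNGCycle Z) (h : (newNGCycles G G').ncard ≤ k + 1) :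
    G'.ngCycleCount ≤ G.ngCycleCount + k := by
  have hkept : ({S | G'.IsNGCycle S} ∩ {S | G.IsNGCycle S}).ncard ≤ G.ngCycleCount - 1 := by
    rw [ngCycleCount,
      ← Set.ncard_sdiff_singleton_of_mem (s := {S : Set Ext | G.IsNGCycle S}) hZ]
    refine Set.ncard_le_ncard ?_ G.finite_setOf_isNGCycle.sdiff
    rintro S ⟨hS', hS⟩
    exact ⟨hS, by rintro rfl; exact hZ' hS'⟩
  have hpos : 0 < G.ngCycleCount := Set.ncard_pos G.finite_setOf_isNGCycle |>.2 ⟨Z, hZ⟩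
  have := ngCycleCount_le_ncard_inter_add_ncard_newNGCycles G G'
  omega

lemma ngCycleCount_le_add_card_sdiff (hG : G.WF) (hocc : G'.occs = G.occs) :
    G'.ngCycleCount ≤ G.ngCycleCount + (G'.adj \ G.adj).card :=
  ngCycleCount_le_add_of_ncard_newNGCycles_le (ncard_newNGCycles_le hG hocc)

lemma ngCycleCount_le_succ_of_subset_insert (hG : G.WF) (hocc : G'.occs = G.occs)
    {p : Sym2 Ext} (h : G'.adj ⊆ insert p G.adj) : G'.ngCycleCount ≤ G.ngCycleCount + 1 := by
  refine (ngCycleCount_le_add_card_sdiff hG hocc).trans (Nat.add_le_add_left ?_ _)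
  refine (Finset.card_le_card (t := {p}) fun q hq => ?_).trans_eq (Finset.card_singleton p)
  obtain ⟨hq', hqG⟩ := Finset.mem_sdiff.1 hq
  exact Finset.mem_singleton.2 ((Finset.mem_insert.1 (h hq')).resolve_right hqG)

/-- In `G`, the class of `a` stays inside `K₁ ∪ K₂`, because the only adjacencies of `G`
lost in `G'`, `(a b)` and `(c d)`, join `K₁` to `K₂`. So it is a cycle of `NG(G)`, and it is not
one of `NG(G')` since it meets both `K₁` and `K₂`. -/
lemma exists_isNGCycle_not_isNGCycle_of_split (hG : G.WF) (hocc : G'.occs = G.occs)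
    {a b c d : Ext} (hab : s(a, b) ∈ G.adj) (hcd : s(c, d) ∈ G.adj)
    (hnew : ∀ p ∈ G'.adj, p ∈ G.adj ∨ p = s(a, c) ∨ p = s(b, d))
    (hlost : ∀ p ∈ G.adj, p ∉ G'.adj → p = s(a, b) ∨ p = s(c, d))
    {K₁ K₂ : Set Ext} (hK₁ : G'.IsNGCycle K₁) (hK₂ : G'.IsNGCycle K₂) (hK : K₁ ≠ K₂)
    (ha : a ∈ K₁) (hc : c ∈ K₁) (hb : b ∈ K₂) (hd : d ∈ K₂) :
    ∃ Z, G.IsNGCycle Z ∧ ¬ G'.IsNGCycle Z := by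
  have hmatched : ∀ f ∈ K₁ ∪ K₂, G.matched f := by
    intro f hf
    obtain ⟨p, hp, hfp⟩ := hf.elim (hK₁.2 f) (hK₂.2 f)
    rcases hnew p hp with hpG | rfl | rfl
    · exact ⟨p, hpG, hfp⟩
    · rcases Sym2.mem_iff.1 hfp with rfl | rfl
      exacts [⟨_, hab, Sym2.mem_mk_left _ _⟩, ⟨_, hcd, Sym2.mem_mk_left _ _⟩]
    · rcases Sym2.mem_iff.1 hfp with rfl | rfl
      exacts [⟨_, hab, Sym2.mem_mk_right _ _⟩, ⟨_, hcd, Sym2.mem_mk_right _ _⟩]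
  have hclosed : ∀ f ∈ K₁ ∪ K₂, ∀ g, G.NGStep f g → g ∈ K₁ ∪ K₂ := by
    intro f hf g hfg
    have hstay : G'.NGStep f g → g ∈ K₁ ∪ K₂ := fun h' =>
      hf.imp (hK₁.1.mem_of_step · h') (hK₂.1.mem_of_step · h')
    rcases hfg with hfg | hflip
    · by_cases hfg' : s(f, g) ∈ G'.adj
      · exact hstay (Or.inl hfg')
      · rcases hlost _ hfg hfg' with h | h <;>
          rcases Sym2.eq_iff.1 h with ⟨rfl, rfl⟩ | ⟨rfl, rfl⟩ <;> simp [ha, hb, hc, hd]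
    · exact hstay (Or.inr (by rwa [hocc]))
  have hb' : b ∈ G.ngClass a := mem_ngClass_of_step (G.mem_ngClass_self a) (Or.inl hab)
  refine ⟨G.ngClass a, ⟨⟨a, hG.1 _ hab a (Sym2.mem_mk_left a b), rfl⟩, fun f hf =>
    hmatched f (ngClass_subset_of_closed (Or.inl ha) hclosed hf)⟩, fun hZ => hK ?_⟩
  exact (hK₁.1.eq_of_mem hZ.1 ha (G.mem_ngClass_self a)).trans (hZ.1.eq_of_mem hK₂.1 hb' hb)

lemma ngCycleCount_le_succ_of_doubleCutJoin (hG : G.WF) (hocc : G'.occs = G.occs)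
    {a b c d : Ext} (hab : s(a, b) ∈ G.adj) (hcd : s(c, d) ∈ G.adj)
    (hG' : G'.adj = insert s(a, c) (insert s(b, d) ((G.adj.erase s(a, b)).erase s(c, d)))) :
    G'.ngCycleCount ≤ G.ngCycleCount + 1 := by
  have hnew : ∀ p ∈ G'.adj, p ∈ G.adj ∨ p = s(a, c) ∨ p = s(b, d) := by
    intro p hp
    rw [hG'] at hp
    simp only [Finset.mem_insert, Finset.mem_erase] at hp
    tauto
  have hlost : ∀ p ∈ G.adj, p ∉ G'.adj → p = s(a, b) ∨ p = s(c, d) := by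
    intro p hp hp'
    rw [hG'] at hp'
    simp only [Finset.mem_insert, Finset.mem_erase] at hp'
    tauto
  have hsdiff : ∀ p ∈ G'.adj \ G.adj, p = s(a, c) ∨ p = s(b, d) := fun p hp =>
    (hnew p (Finset.mem_sdiff.1 hp).1).resolve_left (Finset.mem_sdiff.1 hp).2
  by_cases hZ : ∃ Z, G.IsNGCycle Z ∧ ¬ G'.IsNGCycle Z
  · obtain ⟨Z, hZ, hZ'⟩ := hZ
    refine ngCycleCount_le_add_of_ncard_newNGCycles_le_succ hZ hZ'
      ((ncard_newNGCycles_le hG hocc).trans ?_)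
    calc (G'.adj \ G.adj).card ≤ ({s(a, c), s(b, d)} : Finset (Sym2 Ext)).card :=
          Finset.card_le_card fun p hp => by simpa using hsdiff p hp
      _ ≤ 2 := Finset.card_le_two
  · refine ngCycleCount_le_add_of_ncard_newNGCycles_le ((Set.ncard_le_one
      (G'.finite_setOf_isNGCycle.subset fun S hS => hS.1)).2 fun S hS T hT => ?_)
    by_contra hST
    obtain ⟨p, hp, hpS⟩ := exists_new_adj_of_mem_newNGCycles hG hocc hS
    obtain ⟨q, hq, hqT⟩ := exists_new_adj_of_mem_newNGCycles hG hocc hT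
    have hpq : p ≠ q := by
      rintro rfl
      exact hST (hS.1.1.eq_of_mem hT.1.1 (hpS _ p.out_fst_mem) (hqT _ p.out_fst_mem))
    refine hZ ?_
    rcases hsdiff p hp with rfl | rfl <;> rcases hsdiff q hq with rfl | rfl
    · exact absurd rfl hpq
    · exact exists_isNGCycle_not_isNGCycle_of_split hG hocc hab hcd hnew hlost hS.1 hT.1 hST
        (hpS _ (Sym2.mem_mk_left _ _)) (hpS _ (Sym2.mem_mk_right _ _))
        (hqT _ (Sym2.mem_mk_left _ _)) (hqT _ (Sym2.mem_mk_right _ _))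
    · exact exists_isNGCycle_not_isNGCycle_of_split hG hocc hab hcd hnew hlost hT.1 hS.1
        (Ne.symm hST) (hqT _ (Sym2.mem_mk_left _ _)) (hqT _ (Sym2.mem_mk_right _ _))
        (hpS _ (Sym2.mem_mk_left _ _)) (hpS _ (Sym2.mem_mk_right _ _))
    · exact absurd rfl hpq

lemma isNGCycle_of_map_flipCopy_mem (hG : G.WF) {p : Sym2 Ext} (hp : p ∈ G.adj)
    (hp' : Sym2.map flipCopy p ∈ G.adj) : G.IsNGCycle {x | x ∈ p ∨ flipCopy x ∈ p} := by
  have hmap : ∀ {x}, flipCopy x ∈ p → x ∈ Sym2.map flipCopy p := fun h =>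
    Sym2.mem_map.2 ⟨_, h, flipCopy_flipCopy _⟩
  have hpartner : ∀ {q x y}, q ∈ G.adj → x ∈ q → s(x, y) ∈ G.adj → y ∈ q := fun hq hx hxy =>
    hG.2 _ hxy _ hq _ (Sym2.mem_mk_left _ _) hx ▸ Sym2.mem_mk_right _ _
  induction p using Sym2.ind with | _ u v => ?_
  have hocc : ∀ {x}, x ∈ s(u, v) ∨ flipCopy x ∈ s(u, v) → x.1 ∈ G.occs := by
    rintro x (hx | hx)
    exacts [hG.1 _ hp x hx, hG.1 _ hp' x (hmap hx)]
  refine ⟨⟨u, hocc (Or.inl (Sym2.mem_mk_left u v)), ?_⟩, ?_⟩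
  · refine (Set.Subset.antisymm (ngClass_subset_of_closed (Or.inl (Sym2.mem_mk_left u v)) ?_)
      ?_).symm
    · rintro f (hf | hf) g (hfg | ⟨rfl, -, -⟩)
      · exact Or.inl (hpartner hp hf hfg)
      · exact Or.inr (by rwa [flipCopy_flipCopy])
      · obtain ⟨y, hy, rfl⟩ := Sym2.mem_map.1 (hpartner hp' (hmap hf) hfg)
        exact Or.inr (by rwa [flipCopy_flipCopy])
      · exact Or.inl hf
    · have hu := G.mem_ngClass_self u
      have hv : v ∈ G.ngClass u := mem_ngClass_of_step hu (Or.inl hp)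
      have hflip : ∀ {y}, y ∈ G.ngClass u → y ∈ s(u, v) → flipCopy y ∈ G.ngClass u :=
        fun hy hyp => mem_ngClass_of_step hy (Or.inr ⟨rfl, hocc (Or.inl hyp),
          hocc (Or.inr (by rwa [flipCopy_flipCopy]))⟩)
      rintro x (hx | hx) <;> rcases Sym2.mem_iff.1 hx with h | h
      · exact h ▸ hu
      · exact h ▸ hv
      · exact flipCopy_flipCopy x ▸ h ▸ hflip hu (Sym2.mem_mk_left u v)
      · exact flipCopy_flipCopy x ▸ h ▸ hflip hv (Sym2.mem_mk_right u v)
  · rintro x (hx | hx)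
    exacts [⟨_, hp, hx⟩, ⟨_, hp', hmap hx⟩]

lemma card_le_ngCycleCount_of_map_flipCopy_mem (hG : G.WF) {P : Finset (Sym2 Ext)}
    (hP : P ⊆ G.adj) (hflip : ∀ p ∈ P, Sym2.map flipCopy p ∈ G.adj ∧ Sym2.map flipCopy p ∉ P) :
    P.card ≤ G.ngCycleCount := by
  have hinj : Set.InjOn (fun p : Sym2 Ext => {x | x ∈ p ∨ flipCopy x ∈ p}) P := by
    intro p hp q hq hpq
    have hx : p.out.1 ∈ q ∨ flipCopy p.out.1 ∈ q := by
      simp only at hpq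
      change p.out.1 ∈ {x | x ∈ q ∨ flipCopy x ∈ q}
      rw [← hpq]
      exact Or.inl p.out_fst_mem
    rcases hx with hx | hx
    · exact hG.2 _ (hP hp) _ (hP hq) _ p.out_fst_mem hx
    · have hpq' : p = Sym2.map flipCopy q := hG.2 _ (hP hp) _ (hflip q hq).1 _ p.out_fst_mem
        (Sym2.mem_map.2 ⟨_, hx, flipCopy_flipCopy _⟩)
      exact absurd (hpq' ▸ hp) (hflip q hq).2
  rw [← Set.ncard_coe_finset]
  exact Set.ncard_le_ncard_of_injOn _ (fun p hp =>
    isNGCycle_of_map_flipCopy_mem hG (hP hp) (hflip p hp).1) hinj G.finite_setOf_isNGCycle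

end Genome

lemma IsDCJ.ngCycleCount_le {G G' : Genome} (h : IsDCJ G G') :
    G'.ngCycleCount ≤ G.ngCycleCount + 1 := by
  obtain ⟨hG, -, hocc, hop⟩ := h
  rcases hop with ⟨a, b, c, d, hab, hcd, -, hG' | hG'⟩ | ⟨a, b, c, -, -, hG'⟩ | ⟨a, b, -, hG'⟩ |
    ⟨a, b, -, -, -, hG'⟩
  · exact Genome.ngCycleCount_le_succ_of_doubleCutJoin hG hocc.symm hab hcd hG'
  · refine Genome.ngCycleCount_le_succ_of_doubleCutJoin hG hocc.symm hab
      (Sym2.eq_swap ▸ hcd) ?_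
    rw [hG', Sym2.eq_swap (a := d)]
  · refine Genome.ngCycleCount_le_succ_of_subset_insert hG hocc.symm (p := s(a, c)) ?_
    exact hG' ▸ Finset.insert_subset_insert _ (Finset.erase_subset _ _)
  · refine Genome.ngCycleCount_le_succ_of_subset_insert hG hocc.symm (p := s(a, b)) ?_
    exact hG' ▸ (Finset.erase_subset _ _).trans (Finset.subset_insert _ _)
  · exact Genome.ngCycleCount_le_succ_of_subset_insert hG hocc.symm hG'.le

lemma Scen.occs_eq : ∀ {ℓ : ℕ} {G H : Genome}, Scen IsDCJ ℓ G H → H.occs = G.occs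
  | 0, _, _, rfl => rfl
  | _ + 1, _, _, ⟨_, hGK, hKH⟩ => hKH.occs_eq.trans hGK.2.2.1.symm

lemma Scen.ngCycleCount_le : ∀ {ℓ : ℕ} {G H : Genome}, Scen IsDCJ ℓ G H →
    H.ngCycleCount ≤ G.ngCycleCount + ℓ
  | 0, _, _, rfl => le_rfl
  | ℓ + 1, _, _, ⟨_, hGK, hKH⟩ => by
    have := hGK.ngCycleCount_le
    have := hKH.ngCycleCount_le
    omega

lemma flipCopy_rExt (m : Mk) : flipCopy (rExt m) = rExt (copyFlipM m) := rfl

lemma flipCopy_lExt (m : Mk) : flipCopy (lExt m) = lExt (copyFlipM m) := rfl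

lemma mem_linAdj : ∀ {l : List Mk} {p : Sym2 Ext}, p ∈ linAdj l ↔
    ∃ i, ∃ h : i + 1 < l.length, p = s(rExt l[i], lExt l[i + 1])
  | [], p => by simp [linAdj]
  | [x], p => by simp [linAdj]
  | x :: y :: t, p => by
    rw [linAdj, Finset.mem_insert, mem_linAdj]
    constructor
    · rintro (rfl | ⟨i, h, rfl⟩)
      exacts [⟨0, by simp, rfl⟩, ⟨i + 1, by simpa using h, by simp⟩]
    · rintro ⟨_ | i, h, rfl⟩
      exacts [Or.inl rfl, Or.inr ⟨i, by simpa using h, by simp⟩]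

lemma mOcc_mem_occsOf {l : List Mk} {i : ℕ} (hi : i < l.length) : mOcc l[i] ∈ occsOf l :=
  List.mem_toFinset.2 (List.mem_map_of_mem (List.getElem_mem hi))

lemma mem_occsOf_of_mem_linAdj {l : List Mk} {p : Sym2 Ext} {e : Ext} (hp : p ∈ linAdj l)
    (he : e ∈ p) : e.1 ∈ occsOf l := by
  obtain ⟨i, hi, rfl⟩ := mem_linAdj.1 hp
  rcases Sym2.mem_iff.1 he with rfl | rfl <;> exact mOcc_mem_occsOf _

lemma eq_of_mOcc_getElem_eq {l : List Mk} (hnd : (l.map mOcc).Nodup) {i j : ℕ}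
    {hi : i < l.length} {hj : j < l.length} (h : mOcc l[i] = mOcc l[j]) : i = j := by
  simpa using (hnd.getElem_inj_iff (i := i) (j := j) (hi := by simpa) (hj := by simpa)).1
    (by simpa using h)

lemma rExt_ne_lExt_getElem {l : List Mk} (hnd : (l.map mOcc).Nodup) {i j : ℕ}
    (hi : i < l.length) (hj : j < l.length) : rExt l[i] ≠ lExt l[j] := by
  intro h
  obtain rfl := eq_of_mOcc_getElem_eq hnd (congrArg Prod.fst h)
  simpa [rExt, lExt] using congrArg Prod.snd h

lemma wf_linGenome {l : List Mk} (hnd : (l.map mOcc).Nodup) : (linGenome l).WF := by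
  refine ⟨fun p hp e he => mem_occsOf_of_mem_linAdj hp he, fun p hp q hq e hep heq => ?_⟩
  obtain ⟨i, hi, rfl⟩ := mem_linAdj.1 hp
  obtain ⟨j, hj, rfl⟩ := mem_linAdj.1 hq
  rcases Sym2.mem_iff.1 hep with rfl | rfl <;> rcases Sym2.mem_iff.1 heq with h | h
  · obtain rfl := eq_of_mOcc_getElem_eq hnd (congrArg Prod.fst h)
    rfl
  · exact absurd h (rExt_ne_lExt_getElem hnd _ _)
  · exact absurd h.symm (rExt_ne_lExt_getElem hnd _ _)
  · obtain rfl : i = j := by have := eq_of_mOcc_getElem_eq hnd (congrArg Prod.fst h); omega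
    rfl

lemma card_linAdj : ∀ {l : List Mk}, (l.map mOcc).Nodup → (linAdj l).card = l.length - 1
  | [], _ => rfl
  | [_], _ => rfl
  | x :: y :: t, hnd => by
    have hx : s(rExt x, lExt y) ∉ linAdj (y :: t) := fun h => (List.nodup_cons.1 hnd).1
      (List.mem_toFinset.1 (mem_occsOf_of_mem_linAdj h (Sym2.mem_mk_left _ _)))
    rw [linAdj, Finset.card_insert_of_notMem hx, card_linAdj (List.nodup_cons.1 hnd).2]
    simp

lemma linAdj_subset_append_left (l l' : List Mk) : linAdj l ⊆ linAdj (l ++ l') := by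
  intro p hp
  obtain ⟨i, hi, rfl⟩ := mem_linAdj.1 hp
  exact mem_linAdj.2 ⟨i, by simp; omega, by
    simp only [List.getElem_append_left hi,
      List.getElem_append_left (show i < l.length by omega)]⟩

lemma linAdj_subset_append_right (l l' : List Mk) : linAdj l' ⊆ linAdj (l ++ l') := by
  intro p hp
  obtain ⟨i, hi, rfl⟩ := mem_linAdj.1 hp
  exact mem_linAdj.2 ⟨l.length + i, by simp; omega, by
    simp only [List.getElem_append_right (Nat.le_add_right _ _), Nat.add_sub_cancel_left,
      Nat.add_assoc]⟩

lemma map_flipCopy_mem_linAdj_map {l : List Mk} {p : Sym2 Ext} (hp : p ∈ linAdj l) :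
    Sym2.map flipCopy p ∈ linAdj (l.map copyFlipM) := by
  obtain ⟨i, hi, rfl⟩ := mem_linAdj.1 hp
  exact mem_linAdj.2 ⟨i, by simpa using hi, by simp [flipCopy_rExt, flipCopy_lExt]⟩

lemma eq_of_mem_occsOf {l : List Mk} (hl : (l.map Prod.fst).Nodup) {o o' : Occ}
    (ho : o ∈ occsOf l) (ho' : o' ∈ occsOf l) (h : o.1 = o'.1) : o = o' := by
  obtain ⟨m, hm, rfl⟩ := List.mem_map.1 (List.mem_toFinset.1 ho)
  obtain ⟨m', hm', rfl⟩ := List.mem_map.1 (List.mem_toFinset.1 ho')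
  rw [List.inj_on_of_nodup_map hl hm hm' h]

lemma map_flipCopy_notMem_linAdj {l : List Mk} (hl : (l.map Prod.fst).Nodup) {p : Sym2 Ext}
    (hp : p ∈ linAdj l) : Sym2.map flipCopy p ∉ linAdj l := fun hp' => by
  have h := eq_of_mem_occsOf hl (mem_occsOf_of_mem_linAdj hp p.out_fst_mem)
    (mem_occsOf_of_mem_linAdj hp' (Sym2.mem_map.2 ⟨_, p.out_fst_mem, rfl⟩)) rfl
  simpa [flipCopy] using congrArg Prod.snd h

variable {w : List Mk}

lemma nodup_map_mOcc (hw : (w.map Prod.fst).Nodup) : (w.map mOcc).Nodup :=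
  List.Nodup.of_map Prod.fst (by rwa [List.map_map])

lemma nodup_map_mOcc_tandem (hw : (w.map Prod.fst).Nodup) :
    ((w ++ w.map copyFlipM).map mOcc).Nodup := by
  rw [List.map_append, List.map_map]
  refine (nodup_map_mOcc hw).append (List.Nodup.of_map Prod.fst (by rwa [List.map_map]))
    fun o ho ho' => ?_
  obtain ⟨m, hm, rfl⟩ := List.mem_map.1 ho
  obtain ⟨m', hm', h⟩ := List.mem_map.1 ho'
  obtain rfl := List.inj_on_of_nodup_map hw hm' hm
    (by simpa [mOcc, copyFlipM] using congrArg Prod.fst h)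
  simpa [mOcc, copyFlipM] using congrArg Prod.snd h

lemma numGenes_tandem (hw : (w.map Prod.fst).Nodup) :
    (linGenome (w ++ w.map copyFlipM)).numGenes = w.length := by
  have himage : (linGenome (w ++ w.map copyFlipM)).occs.image Prod.fst =
      (w.map Prod.fst).toFinset := by
    ext g
    simp [linGenome, occsOf, mOcc, copyFlipM]
    tauto
  rw [Genome.numGenes, himage, List.toFinset_card_of_nodup hw, List.length_map]

lemma length_sub_one_le_ngCycleCount_tandem (hw : (w.map Prod.fst).Nodup) :
    w.length - 1 ≤ (linGenome (w ++ w.map copyFlipM)).ngCycleCount := by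
  rw [← card_linAdj (nodup_map_mOcc hw)]
  exact Genome.card_le_ngCycleCount_of_map_flipCopy_mem
    (wf_linGenome (nodup_map_mOcc_tandem hw)) (linAdj_subset_append_left _ _) fun p hp =>
      ⟨linAdj_subset_append_right _ _ (map_flipCopy_mem_linAdj_map hp),
        map_flipCopy_notMem_linAdj hw hp⟩

theorem tandem_halving_dcj_lowerbound_general (G : Genome)
    (n C d : ℕ) (hn : n = G.numGenes) (hC : C = G.ngCycleCount)
    (hd : IsLeast {ℓ : ℕ | ∃ H : Genome, IsTandem H ∧ Scen IsDCJ ℓ G H} d) :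
    n - C - 1 ≤ d := by
  obtain ⟨⟨_, ⟨w, -, hw, rfl⟩, hscen⟩, -⟩ := hd
  have hcycles := hscen.ngCycleCount_le
  have hlength : w.length = n := by
    rw [hn, ← numGenes_tandem hw, Genome.numGenes, Genome.numGenes, hscen.occs_eq]
  have := length_sub_one_le_ngCycleCount_tandem hw
  omega

/-- Lower bound on the DCJ 1-tandem halving distance of a totally duplicated
genome `G` consisting of a single linear chromosome with `n` distinct markers:
`d^t_DCJ(G) ≥ n − C − 1` where `C` is the number of cycles of the natural
graph `NG(G)`. -/
theorem tandem_halving_dcj_lowerbound (G : Genome) (hwf : G.WF)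
    (htd : G.TotDup) (huni : G.Unilinear)
    (n C d : ℕ) (hn : n = G.numGenes) (hC : C = G.ngCycleCount)
    (hd : IsLeast {ℓ : ℕ | ∃ H : Genome, IsTandem H ∧ Scen IsDCJ ℓ G H} d) :
    n - C - 1 ≤ d :=
  tandem_halving_dcj_lowerbound_general G n C d hn hC hd

end Rearr
end
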